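/- arXiv:cond-mat/9904379 — 10 statements merged into one kernel-verified Lean document; each statement's English description precedes it below -/
import Mathlib

section
/- Let d₁, d₂ > 0 and set d := max{d₁, d₂}. For α ∈ ℝ, the equation −α = ℓ(cot(ℓd₁) + cot(ℓd₂)) has a solution ℓ ∈ (0, π/d) if and only if α > −(1/d₁ + 1/d₂). (Note that for ℓ ∈ (0, π/d) one has 0 < ℓd₁ < π and 0 < ℓd₂ < π, so both cotangents are finite.) -/
open Real Filter Set Topology

private lemma aux_tcos_lt_sin {t : ℝ} (h0 : 0 < t) (hπ : t < π) : t * Real.cos t < Real.sin t := by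
  rcases lt_or_ge t (π / 2) with h | h
  · have hc : 0 < Real.cos t := Real.cos_pos_of_mem_Ioo ⟨by linarith [Real.pi_pos], h⟩
    have ht := Real.lt_tan h0 h
    rw [Real.tan_eq_sin_div_cos, lt_div_iff₀ hc] at ht
    linarith
  · have hc : Real.cos t ≤ 0 := Real.cos_nonpos_of_pi_div_two_le_of_le h (by linarith [Real.pi_pos])
    have hs : 0 < Real.sin t := Real.sin_pos_of_pos_of_lt_pi h0 hπ
    nlinarith

private lemma aux_term_lt {d ℓ : ℝ} (hd : 0 < d) (h0 : 0 < ℓ) (h : ℓ * d < π) :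
    ℓ * (Real.cos (ℓ * d) / Real.sin (ℓ * d)) < 1 / d := by
  have hs : 0 < Real.sin (ℓ * d) := Real.sin_pos_of_pos_of_lt_pi (by positivity) h
  have key := aux_tcos_lt_sin (t := ℓ * d) (by positivity) h
  rw [mul_div_assoc', div_lt_div_iff₀ hs hd]
  nlinarith

private lemma key_lemma (d₁ d₂ : ℝ) (hd₁ : 0 < d₁) (hd₂ : 0 < d₂) (hle : d₂ ≤ d₁) (α : ℝ) :
    (∃ ℓ ∈ Set.Ioo (0 : ℝ) (π / d₁),
        -α = ℓ * (Real.cos (ℓ * d₁) / Real.sin (ℓ * d₁) + Real.cos (ℓ * d₂) / Real.sin (ℓ * d₂))) ↔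
      -(1 / d₁ + 1 / d₂) < α := by
  have hπ := Real.pi_pos
  constructor
  · rintro ⟨ℓ, ⟨h0, h1⟩, heq⟩
    have hℓd₁ : ℓ * d₁ < π := by rw [lt_div_iff₀ hd₁] at h1; linarith
    have hℓd₂ : ℓ * d₂ < π := lt_of_le_of_lt (by nlinarith) hℓd₁
    have t1 := aux_term_lt hd₁ h0 hℓd₁
    have t2 := aux_term_lt hd₂ h0 hℓd₂
    have : -α < 1 / d₁ + 1 / d₂ := by rw [heq]; nlinarith
    linarith
  · intro hα
    have hα' : -α < 1 / d₁ + 1 / d₂ := by linarith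
    set f : ℝ → ℝ := fun ℓ =>
      ℓ * (Real.cos (ℓ * d₁) / Real.sin (ℓ * d₁) + Real.cos (ℓ * d₂) / Real.sin (ℓ * d₂)) with hf
    -- limit at 0⁺ of f is 1/d₁ + 1/d₂
    have hslope : ∀ d : ℝ, 0 < d →
        Tendsto (fun ℓ : ℝ => Real.sin (ℓ * d) / ℓ) (𝓝[>] (0 : ℝ)) (𝓝 d) := by
      intro d hd
      have hder : HasDerivAt (fun ℓ : ℝ => Real.sin (ℓ * d)) (Real.cos (0 * d) * (1 * d)) 0 :=
        (HasDerivAt.sin ((hasDerivAt_id (0 : ℝ)).mul_const d))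
      have := hasDerivAt_iff_tendsto_slope.mp hder
      simp only [zero_mul, Real.cos_zero, one_mul] at this
      have h2 : Tendsto (slope (fun ℓ : ℝ => Real.sin (ℓ * d)) 0) (𝓝[>] (0 : ℝ)) (𝓝 d) :=
        this.mono_left (nhdsWithin_mono _ (fun x hx => by
          simp only [Set.mem_compl_iff, Set.mem_singleton_iff]; exact ne_of_gt hx))
      refine h2.congr' ?_
      filter_upwards [self_mem_nhdsWithin] with x hx
      simp [slope_def_field, div_eq_div_iff (ne_of_gt (Set.mem_Ioi.mp hx))]
    have hterm : ∀ d : ℝ, 0 < d →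
        Tendsto (fun ℓ : ℝ => ℓ * (Real.cos (ℓ * d) / Real.sin (ℓ * d))) (𝓝[>] (0 : ℝ))
          (𝓝 (1 / d)) := by
      intro d hd
      have hc : Tendsto (fun ℓ : ℝ => Real.cos (ℓ * d)) (𝓝[>] (0 : ℝ)) (𝓝 1) := by
        have h1 : ContinuousAt (fun ℓ : ℝ => Real.cos (ℓ * d)) 0 := by fun_prop
        have h2 : Tendsto (fun ℓ : ℝ => Real.cos (ℓ * d)) (𝓝 (0 : ℝ))
            (𝓝 (Real.cos (0 * d))) := h1
        rw [zero_mul, Real.cos_zero] at h2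
        exact h2.mono_left nhdsWithin_le_nhds
      have hinv : Tendsto (fun ℓ : ℝ => (Real.sin (ℓ * d) / ℓ)⁻¹) (𝓝[>] (0 : ℝ)) (𝓝 d⁻¹) :=
        (hslope d hd).inv₀ (ne_of_gt hd)
      have := hc.mul hinv
      rw [one_mul] at this
      refine Tendsto.congr' ?_ (by simpa [one_div] using this)
      filter_upwards [Ioo_mem_nhdsGT_of_mem (Set.left_mem_Ico.mpr (by positivity : (0:ℝ) < π / d))]
        with x hx
      have hx0 : 0 < x := hx.1
      have hxd : x * d < π := (lt_div_iff₀ hd).mp hx.2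
      have hs : Real.sin (x * d) ≠ 0 :=
        ne_of_gt (Real.sin_pos_of_pos_of_lt_pi (by positivity) hxd)
      field_simp
    have hlim0 : Tendsto f (𝓝[>] (0 : ℝ)) (𝓝 (1 / d₁ + 1 / d₂)) := by
      have := (hterm d₁ hd₁).add (hterm d₂ hd₂)
      refine this.congr fun x => by simp [hf]; ring
    -- find ℓ₀ near 0 with f ℓ₀ > -α
    have hev0 : ∀ᶠ ℓ in 𝓝[>] (0 : ℝ), -α < f ℓ :=
      hlim0.eventually (eventually_gt_nhds hα')
    have hmem0 : Set.Ioo (0 : ℝ) (π / d₁) ∈ 𝓝[>] (0 : ℝ) :=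
      Ioo_mem_nhdsGT_of_mem (Set.left_mem_Ico.mpr (by positivity))
    obtain ⟨ℓ₀, hℓ₀f, hℓ₀mem⟩ := (hev0.and (Filter.eventually_of_mem hmem0 fun x hx => hx)).exists
    -- limit at (π/d₁)⁻ of f is -∞
    have hlimtop : Tendsto f (𝓝[<] (π / d₁)) atBot := by
      have hmemI : Set.Ioo (π / (2 * d₁)) (π / d₁) ∈ 𝓝[<] (π / d₁) :=
        Ioo_mem_nhdsLT_of_mem (Set.right_mem_Ioc.mpr (by
          apply div_lt_div_of_pos_left hπ hd₁; linarith))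
      have hsin0 : Tendsto (fun ℓ : ℝ => Real.sin (ℓ * d₁)) (𝓝[<] (π / d₁)) (𝓝[>] (0 : ℝ)) := by
        rw [tendsto_nhdsWithin_iff]
        constructor
        · have h1 : ContinuousAt (fun ℓ : ℝ => Real.sin (ℓ * d₁)) (π / d₁) := by fun_prop
          have h2 : Tendsto (fun ℓ : ℝ => Real.sin (ℓ * d₁)) (𝓝[<] (π / d₁))
              (𝓝 (Real.sin (π / d₁ * d₁))) := h1.continuousWithinAt
          rwa [div_mul_cancel₀ π (ne_of_gt hd₁), Real.sin_pi] at h2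
        · filter_upwards [hmemI] with x hx
          have hx1 : 0 < x := lt_trans (by positivity) hx.1
          have hx2 : x * d₁ < π := (lt_div_iff₀ hd₁).mp hx.2
          exact Real.sin_pos_of_pos_of_lt_pi (by positivity) hx2
      have hinvtop : Tendsto (fun ℓ : ℝ => (Real.sin (ℓ * d₁))⁻¹) (𝓝[<] (π / d₁)) atTop :=
        tendsto_inv_nhdsGT_zero.comp hsin0
      have hnum : Tendsto (fun ℓ : ℝ => ℓ * Real.cos (ℓ * d₁)) (𝓝[<] (π / d₁))
          (𝓝 (π / d₁ * Real.cos π)) := by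
        have h1 : ContinuousAt (fun ℓ : ℝ => ℓ * Real.cos (ℓ * d₁)) (π / d₁) := by fun_prop
        have h2 : Tendsto (fun ℓ : ℝ => ℓ * Real.cos (ℓ * d₁)) (𝓝[<] (π / d₁))
            (𝓝 (π / d₁ * Real.cos (π / d₁ * d₁))) := h1.continuousWithinAt
        rwa [div_mul_cancel₀ π (ne_of_gt hd₁)] at h2
      have hC : π / d₁ * Real.cos π < 0 := by
        rw [Real.cos_pi]
        have h : 0 < π / d₁ := by positivity
        nlinarith
      have ht1 : Tendsto (fun ℓ : ℝ => ℓ * Real.cos (ℓ * d₁) * (Real.sin (ℓ * d₁))⁻¹)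
          (𝓝[<] (π / d₁)) atBot := hnum.neg_mul_atTop hC hinvtop
      have ht2 : Tendsto (fun ℓ : ℝ => ℓ * Real.cos (ℓ * d₁) * (Real.sin (ℓ * d₁))⁻¹ + 1 / d₂)
          (𝓝[<] (π / d₁)) atBot := tendsto_atBot_add_const_right _ _ ht1
      refine tendsto_atBot_mono' _ ?_ ht2
      filter_upwards [hmemI] with x hx
      have hx1 : 0 < x := lt_trans (by positivity) hx.1
      have hx2 : x * d₁ < π := (lt_div_iff₀ hd₁).mp hx.2
      have hxd₂ : x * d₂ < π := lt_of_le_of_lt (by nlinarith) hx2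
      have t2 := aux_term_lt hd₂ hx1 hxd₂
      simp only [hf, mul_add, mul_div_assoc]
      rw [div_eq_mul_inv]
      linarith
    have hev1 : ∀ᶠ ℓ in 𝓝[<] (π / d₁), f ℓ ≤ -α := hlimtop.eventually (eventually_le_atBot _)
    have hmem1 : Set.Ioo ℓ₀ (π / d₁) ∈ 𝓝[<] (π / d₁) :=
      Ioo_mem_nhdsLT_of_mem (Set.right_mem_Ioc.mpr hℓ₀mem.2)
    obtain ⟨ℓ₁, hℓ₁f, hℓ₁mem⟩ := (hev1.and (Filter.eventually_of_mem hmem1 fun x hx => hx)).exists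
    -- IVT
    have hsub : Set.Icc ℓ₀ ℓ₁ ⊆ Set.Ioo (0 : ℝ) (π / d₁) := fun x hx =>
      ⟨lt_of_lt_of_le hℓ₀mem.1 hx.1, lt_of_le_of_lt hx.2 hℓ₁mem.2⟩
    have hcont : ContinuousOn f (Set.Icc ℓ₀ ℓ₁) := by
      have hs : ∀ d : ℝ, 0 < d → d ≤ d₁ → ∀ x ∈ Set.Icc ℓ₀ ℓ₁, Real.sin (x * d) ≠ 0 := by
        intro d hd hdle x hx
        obtain ⟨hx1, hx2⟩ := hsub hx
        have : x * d < π := by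
          have := (lt_div_iff₀ hd₁).mp hx2
          nlinarith
        exact ne_of_gt (Real.sin_pos_of_pos_of_lt_pi (by positivity) this)
      apply ContinuousOn.mul continuousOn_id
      exact ((Real.continuous_cos.comp (continuous_id.mul continuous_const)).continuousOn.div
          (Real.continuous_sin.comp (continuous_id.mul continuous_const)).continuousOn
          (hs d₁ hd₁ le_rfl)).add
        ((Real.continuous_cos.comp (continuous_id.mul continuous_const)).continuousOn.div
          (Real.continuous_sin.comp (continuous_id.mul continuous_const)).continuousOn
          (hs d₂ hd₂ hle))
    have hivt := intermediate_value_Icc' (le_of_lt hℓ₁mem.1) hcont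
    have : -α ∈ Set.Icc (f ℓ₁) (f ℓ₀) := ⟨hℓ₁f, le_of_lt hℓ₀f⟩
    obtain ⟨ℓ, hℓmem, hℓeq⟩ := hivt this
    exact ⟨ℓ, hsub hℓmem, hℓeq.symm⟩

/-- The spectral condition `-α = ℓ(cot(ℓd₁) + cot(ℓd₂))` has a solution
`ℓ ∈ (0, π/d)` with `d = max d₁ d₂` iff `α > -(1/d₁ + 1/d₂)`. -/
theorem spectral_condition_first_interval_iff
    (d₁ d₂ : ℝ) (hd₁ : 0 < d₁) (hd₂ : 0 < d₂) (α : ℝ) :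
    (∃ ℓ ∈ Set.Ioo (0 : ℝ) (π / max d₁ d₂),
        -α = ℓ * (Real.cot (ℓ * d₁) + Real.cot (ℓ * d₂))) ↔
      -(1 / d₁ + 1 / d₂) < α := by
  simp only [Real.cot_eq_cos_div_sin]
  rcases le_total d₂ d₁ with h | h
  · rw [max_eq_left h]
    exact key_lemma d₁ d₂ hd₁ hd₂ h α
  · rw [max_eq_right h]
    have := key_lemma d₂ d₁ hd₂ hd₁ h α
    constructor
    · rintro ⟨ℓ, hmem, heq⟩
      have := this.mp ⟨ℓ, hmem, by rw [heq]; ring⟩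
      linarith
    · intro hα
      obtain ⟨ℓ, hmem, heq⟩ := this.mpr (by linarith)
      exact ⟨ℓ, hmem, by rw [heq]; ring⟩
end

section
/- Let d₁, d₂ > 0 and let P := {kπ/d₁ : k ∈ ℕ, k ≥ 1} ∪ {kπ/d₂ : k ∈ ℕ, k ≥ 1}. For every α ∈ ℝ and every pair p < p′ of consecutive elements of P (i.e., p, p′ ∈ P and (p, p′) ∩ P = ∅), there exists ℓ ∈ (p, p′) with sin(ℓd₁)·sin(ℓd₂) ≠ 0 and ℓ(cot(ℓd₁) + cot(ℓd₂)) = −α. -/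
open Real
open Filter Topology

lemma cot_add_int_mul_pi (x : ℝ) (n : ℤ) : Real.cot (x + n * π) = Real.cot x := by
  rw [Real.cot_eq_cos_div_sin, Real.cot_eq_cos_div_sin, Real.sin_add_int_mul_pi,
    Real.cos_add_int_mul_pi]
  rw [mul_div_mul_left]
  positivity

lemma tendsto_cot_right : Tendsto Real.cot (𝓝[>] (0:ℝ)) atTop := by
  have hsin : Tendsto Real.sin (𝓝[>] (0:ℝ)) (𝓝[>] 0) := by
    apply tendsto_nhdsWithin_of_tendsto_nhds_of_eventually_within
    · simpa using (Real.continuous_sin.tendsto 0).mono_left nhdsWithin_le_nhds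
    · filter_upwards [Ioo_mem_nhdsGT_of_mem (Set.mem_Ico.2 ⟨le_refl 0, Real.pi_pos⟩)] with x hx
      exact Real.sin_pos_of_pos_of_lt_pi hx.1 hx.2
  have hinv : Tendsto (fun x => (Real.sin x)⁻¹) (𝓝[>] (0:ℝ)) atTop := hsin.inv_tendsto_nhdsGT_zero
  have hcos : Tendsto Real.cos (𝓝[>] (0:ℝ)) (𝓝 1) := by
    simpa using (Real.continuous_cos.tendsto 0).mono_left nhdsWithin_le_nhds
  have := hinv.atTop_mul_pos (zero_lt_one) hcos
  refine this.congr fun x => ?_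
  rw [Real.cot_eq_cos_div_sin, div_eq_mul_inv, mul_comm]

lemma cot_neg' (x : ℝ) : Real.cot (-x) = -Real.cot x := by
  rw [Real.cot_eq_cos_div_sin, Real.cot_eq_cos_div_sin, Real.cos_neg, Real.sin_neg, div_neg]

lemma tendsto_cot_left : Tendsto Real.cot (𝓝[<] (0:ℝ)) atBot := by
  have hneg : Tendsto (fun x : ℝ => -x) (𝓝[<] (0:ℝ)) (𝓝[>] (0:ℝ)) := by
    have := (continuous_neg.tendsto (0:ℝ)).mono_left (nhdsWithin_le_nhds (s := Set.Iio 0))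
    rw [neg_zero] at this
    apply tendsto_nhdsWithin_of_tendsto_nhds_of_eventually_within _ this
    filter_upwards [self_mem_nhdsWithin] with x hx
    simpa using hx
  have := tendsto_cot_right.comp hneg
  have h2 : Tendsto (fun x : ℝ => -Real.cot x) (𝓝[<] (0:ℝ)) atTop := by
    refine this.congr fun x => ?_
    simp [Function.comp, cot_neg']
  exact tendsto_neg_atTop_iff.1 h2

lemma pole_right {d q : ℝ} (hd : 0 < d) (hq : Real.sin (q * d) = 0) :
    Tendsto (fun ℓ => Real.cot (ℓ * d)) (𝓝[>] q) atTop := by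
  obtain ⟨n, hn⟩ := Real.sin_eq_zero_iff.1 hq
  have hmap : Tendsto (fun ℓ => ℓ * d - n * π) (𝓝[>] q) (𝓝[>] 0) := by
    apply tendsto_nhdsWithin_of_tendsto_nhds_of_eventually_within
    · have : Tendsto (fun ℓ => ℓ * d - n * π) (𝓝 q) (𝓝 (q * d - n * π)) := by
        exact ((continuous_id.mul continuous_const).sub continuous_const).tendsto q
      simpa only [← hn, sub_self] using this.mono_left nhdsWithin_le_nhds
    · filter_upwards [self_mem_nhdsWithin] with x hx
      have : q * d < x * d := by exact mul_lt_mul_of_pos_right hx hd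
      simp only [Set.mem_Ioi]
      linarith [hn ▸ this]
  have := tendsto_cot_right.comp hmap
  refine this.congr fun x => ?_
  simp only [Function.comp]
  have : x * d - n * π + n * π = x * d := by ring
  rw [← cot_add_int_mul_pi (x * d - n * π) n, this]

lemma pole_left {d q : ℝ} (hd : 0 < d) (hq : Real.sin (q * d) = 0) :
    Tendsto (fun ℓ => Real.cot (ℓ * d)) (𝓝[<] q) atBot := by
  obtain ⟨n, hn⟩ := Real.sin_eq_zero_iff.1 hq
  have hmap : Tendsto (fun ℓ => ℓ * d - n * π) (𝓝[<] q) (𝓝[<] 0) := by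
    apply tendsto_nhdsWithin_of_tendsto_nhds_of_eventually_within
    · have : Tendsto (fun ℓ => ℓ * d - n * π) (𝓝 q) (𝓝 (q * d - n * π)) := by
        exact ((continuous_id.mul continuous_const).sub continuous_const).tendsto q
      simpa only [← hn, sub_self] using this.mono_left nhdsWithin_le_nhds
    · filter_upwards [self_mem_nhdsWithin] with x hx
      have : x * d < q * d := by exact mul_lt_mul_of_pos_right hx hd
      simp only [Set.mem_Iio]
      linarith [hn ▸ this]
  have := tendsto_cot_left.comp hmap
  refine this.congr fun x => ?_
  simp only [Function.comp]
  have : x * d - n * π + n * π = x * d := by ring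
  rw [← cot_add_int_mul_pi (x * d - n * π) n, this]

lemma cot_tendsto_at_nonpole {d q : ℝ} (h : Real.sin (q * d) ≠ 0) :
    Tendsto (fun ℓ => Real.cot (ℓ * d)) (𝓝 q) (𝓝 (Real.cot (q * d))) := by
  have hc : ContinuousAt (fun ℓ => Real.cos (ℓ * d) / Real.sin (ℓ * d)) q := by
    apply ContinuousAt.div
    · exact (Real.continuous_cos.comp (continuous_id.mul continuous_const)).continuousAt
    · exact (Real.continuous_sin.comp (continuous_id.mul continuous_const)).continuousAt
    · exact h
  simpa only [Real.cot_eq_cos_div_sin] using hc.tendsto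

lemma cot_bddBelow {d q : ℝ} (hd : 0 < d) :
    ∃ c, ∀ᶠ ℓ in 𝓝[>] q, c ≤ Real.cot (ℓ * d) := by
  by_cases h : Real.sin (q * d) = 0
  · exact ⟨0, (pole_right hd h).eventually_ge_atTop 0⟩
  · refine ⟨Real.cot (q * d) - 1, ?_⟩
    exact ((cot_tendsto_at_nonpole h).mono_left nhdsWithin_le_nhds).eventually
      (eventually_ge_nhds (by linarith))

lemma cot_bddAbove {d q : ℝ} (hd : 0 < d) :
    ∃ c, ∀ᶠ ℓ in 𝓝[<] q, Real.cot (ℓ * d) ≤ c := by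
  by_cases h : Real.sin (q * d) = 0
  · exact ⟨0, (pole_left hd h).eventually_le_atBot 0⟩
  · refine ⟨Real.cot (q * d) + 1, ?_⟩
    exact ((cot_tendsto_at_nonpole h).mono_left nhdsWithin_le_nhds).eventually
      (eventually_le_nhds (by linarith))

lemma f_tendsto_top {d₁ d₂ p : ℝ} (hd₁ : 0 < d₁) (hd₂ : 0 < d₂) (hp0 : 0 < p)
    (h : Real.sin (p * d₁) = 0 ∨ Real.sin (p * d₂) = 0) :
    Tendsto (fun ℓ => ℓ * (Real.cot (ℓ * d₁) + Real.cot (ℓ * d₂))) (𝓝[>] p) atTop := by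
  have hsum : Tendsto (fun ℓ => Real.cot (ℓ * d₁) + Real.cot (ℓ * d₂)) (𝓝[>] p) atTop := by
    rcases h with h | h
    · obtain ⟨c, hc⟩ := cot_bddBelow (q := p) hd₂
      exact tendsto_atTop_add_right_of_le' _ c (pole_right hd₁ h) hc
    · obtain ⟨c, hc⟩ := cot_bddBelow (q := p) hd₁
      exact (tendsto_atTop_add_right_of_le' _ c (pole_right hd₂ h) hc).congr
        fun x => add_comm _ _
  have hid : Tendsto (fun ℓ : ℝ => ℓ) (𝓝[>] p) (𝓝 p) :=
    tendsto_id.mono_left nhdsWithin_le_nhds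
  exact hid.pos_mul_atTop hp0 hsum

lemma f_tendsto_bot {d₁ d₂ p : ℝ} (hd₁ : 0 < d₁) (hd₂ : 0 < d₂) (hp0 : 0 < p)
    (h : Real.sin (p * d₁) = 0 ∨ Real.sin (p * d₂) = 0) :
    Tendsto (fun ℓ => ℓ * (Real.cot (ℓ * d₁) + Real.cot (ℓ * d₂))) (𝓝[<] p) atBot := by
  have hsum : Tendsto (fun ℓ => Real.cot (ℓ * d₁) + Real.cot (ℓ * d₂)) (𝓝[<] p) atBot := by
    rcases h with h | h
    · obtain ⟨c, hc⟩ := cot_bddAbove (q := p) hd₂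
      exact tendsto_atBot_add_right_of_ge' _ c (pole_left hd₁ h) hc
    · obtain ⟨c, hc⟩ := cot_bddAbove (q := p) hd₁
      exact (tendsto_atBot_add_right_of_ge' _ c (pole_left hd₂ h) hc).congr
        fun x => add_comm _ _
  have hid : Tendsto (fun ℓ : ℝ => ℓ) (𝓝[<] p) (𝓝 p) :=
    tendsto_id.mono_left nhdsWithin_le_nhds
  exact hid.pos_mul_atBot hp0 hsum

/-- Between any two consecutive poles of `ℓ ↦ ℓ(cot(ℓd₁) + cot(ℓd₂))` there is,
for every `α ∈ ℝ`, a solution of the spectral condition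
`ℓ(cot(ℓd₁) + cot(ℓd₂)) = -α`. -/
theorem spectral_condition_solution_between_consecutive_poles
    (d₁ d₂ : ℝ) (hd₁ : 0 < d₁) (hd₂ : 0 < d₂) (α : ℝ)
    (P : Set ℝ)
    (hP : P = {x : ℝ | ∃ k : ℕ, 1 ≤ k ∧ (x = k * π / d₁ ∨ x = k * π / d₂)})
    (p p' : ℝ) (hp : p ∈ P) (hp' : p' ∈ P) (hpp' : p < p')
    (hcons : Set.Ioo p p' ∩ P = ∅) :
    ∃ ℓ ∈ Set.Ioo p p',
      Real.sin (ℓ * d₁) * Real.sin (ℓ * d₂) ≠ 0 ∧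
      ℓ * (Real.cot (ℓ * d₁) + Real.cot (ℓ * d₂)) = -α := by
  rw [hP] at hp hp'
  -- positivity and pole facts for p and p'
  have hpole : ∀ x : ℝ, (∃ k : ℕ, 1 ≤ k ∧ (x = k * π / d₁ ∨ x = k * π / d₂)) →
      0 < x ∧ (Real.sin (x * d₁) = 0 ∨ Real.sin (x * d₂) = 0) := by
    rintro x ⟨k, hk, hx | hx⟩
    · have hk' : (1:ℝ) ≤ (k:ℝ) := by exact_mod_cast hk
      constructor
      · rw [hx]; positivity
      · left
        rw [hx, div_mul_cancel₀ _ (ne_of_gt hd₁)]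
        have := Real.sin_int_mul_pi (k : ℤ)
        simpa using this
    · have hk' : (1:ℝ) ≤ (k:ℝ) := by exact_mod_cast hk
      constructor
      · rw [hx]; positivity
      · right
        rw [hx, div_mul_cancel₀ _ (ne_of_gt hd₂)]
        have := Real.sin_int_mul_pi (k : ℤ)
        simpa using this
  obtain ⟨hp0, hpsin⟩ := hpole p hp
  obtain ⟨hp'0, hp'sin⟩ := hpole p' hp'
  -- no zeros of the sines inside the interval
  have key : ∀ d : ℝ, 0 < d → ∀ ℓ ∈ Set.Ioo p p', Real.sin (ℓ * d) = 0 →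
      ∃ k : ℕ, 1 ≤ k ∧ ℓ = k * π / d := by
    intro d hd ℓ hℓ hs
    obtain ⟨n, hn⟩ := Real.sin_eq_zero_iff.1 hs
    have hℓ0 : 0 < ℓ := lt_trans hp0 hℓ.1
    have hnpos : 0 < n := by
      have : (0:ℝ) < n * π := hn ▸ by positivity
      by_contra hle
      push_neg at hle
      have : (n:ℝ) * π ≤ 0 := mul_nonpos_of_nonpos_of_nonneg
        (by exact_mod_cast hle) Real.pi_pos.le
      linarith
    refine ⟨n.toNat, by omega, ?_⟩
    have hcast : ((n.toNat : ℕ) : ℝ) = (n : ℝ) := by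
      exact_mod_cast congrArg (Int.cast : ℤ → ℝ) (Int.toNat_of_nonneg hnpos.le)
    rw [hcast, eq_div_iff (ne_of_gt hd)]
    linarith [hn]
  have hsin : ∀ ℓ ∈ Set.Ioo p p', Real.sin (ℓ * d₁) ≠ 0 ∧ Real.sin (ℓ * d₂) ≠ 0 := by
    intro ℓ hℓ
    constructor
    · intro hs
      obtain ⟨k, hk, hkeq⟩ := key d₁ hd₁ ℓ hℓ hs
      have : ℓ ∈ Set.Ioo p p' ∩ P := ⟨hℓ, by rw [hP]; exact ⟨k, hk, Or.inl hkeq⟩⟩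
      rw [hcons] at this; exact this
    · intro hs
      obtain ⟨k, hk, hkeq⟩ := key d₂ hd₂ ℓ hℓ hs
      have : ℓ ∈ Set.Ioo p p' ∩ P := ⟨hℓ, by rw [hP]; exact ⟨k, hk, Or.inr hkeq⟩⟩
      rw [hcons] at this; exact this
  set f : ℝ → ℝ := fun ℓ => ℓ * (Real.cot (ℓ * d₁) + Real.cot (ℓ * d₂)) with hf
  -- find a near p with f a > -α
  have htop := f_tendsto_top hd₁ hd₂ hp0 hpsin
  have hbot := f_tendsto_bot hd₁ hd₂ hp'0 hp'sin
  have hIoo : Set.Ioo p p' ∈ 𝓝[>] p := Ioo_mem_nhdsGT_of_mem ⟨le_refl p, hpp'⟩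
  obtain ⟨a, haI, haf⟩ : ∃ a, a ∈ Set.Ioo p p' ∧ -α < f a := by
    have := (Filter.eventually_of_mem hIoo (fun x hx => hx)).and (htop.eventually_gt_atTop (-α))
    exact this.exists
  have hIoo' : Set.Ioo a p' ∈ 𝓝[<] p' := Ioo_mem_nhdsLT_of_mem ⟨haI.2, le_refl p'⟩
  obtain ⟨b, hbI, hbf⟩ : ∃ b, b ∈ Set.Ioo a p' ∧ f b < -α := by
    have := (Filter.eventually_of_mem hIoo' (fun x hx => hx)).and (hbot.eventually_lt_atBot (-α))
    exact this.exists
  have hab : a ≤ b := hbI.1.le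
  have hsub : Set.Icc a b ⊆ Set.Ioo p p' := fun x hx =>
    ⟨lt_of_lt_of_le haI.1 hx.1, lt_of_le_of_lt hx.2 hbI.2⟩
  have hcont : ContinuousOn f (Set.Icc a b) := by
    have : ∀ x ∈ Set.Icc a b, f x = x * (Real.cos (x * d₁) / Real.sin (x * d₁) +
        Real.cos (x * d₂) / Real.sin (x * d₂)) := by
      intro x _; simp [hf, Real.cot_eq_cos_div_sin]
    rw [continuousOn_congr this]
    apply ContinuousOn.mul continuousOn_id
    apply ContinuousOn.add
    · apply ContinuousOn.div
      · exact (Real.continuous_cos.comp (continuous_id.mul continuous_const)).continuousOn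
      · exact (Real.continuous_sin.comp (continuous_id.mul continuous_const)).continuousOn
      · exact fun x hx => (hsin x (hsub hx)).1
    · apply ContinuousOn.div
      · exact (Real.continuous_cos.comp (continuous_id.mul continuous_const)).continuousOn
      · exact (Real.continuous_sin.comp (continuous_id.mul continuous_const)).continuousOn
      · exact fun x hx => (hsin x (hsub hx)).2
  have hIVT := intermediate_value_Icc' hab hcont
  have hmem : -α ∈ Set.Icc (f b) (f a) := ⟨hbf.le, haf.le⟩
  obtain ⟨ℓ, hℓmem, hℓeq⟩ := hIVT hmem
  have hℓI : ℓ ∈ Set.Ioo p p' := hsub hℓmem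
  obtain ⟨h1, h2⟩ := hsin ℓ hℓI
  exact ⟨ℓ, hℓI, mul_ne_zero h1 h2, hℓeq⟩
end

section
/- Let d₁, d₂ > 0 and let I ⊆ (0,∞) be an open interval such that sin(ℓd₁)·sin(ℓd₂) ≠ 0 for all ℓ ∈ I. Then the function f(ℓ) := ℓ(cot(ℓd₁) + cot(ℓd₂)) is strictly decreasing on I. In particular, for every d > 0 and every ℓ > 0 with sin(ℓd) ≠ 0 one has d/dℓ[ℓ·cot(ℓd)] = (½·sin(2ℓd) − ℓd)/sin²(ℓd) < 0. -/
open Real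

theorem strictAntiOn_of_hasDerivAt_neg {D : Set ℝ} (hD : Convex ℝ D)
    {f f' : ℝ → ℝ} (hf : ∀ x ∈ D, HasDerivAt f (f' x) x) (hf' : ∀ x ∈ D, f' x < 0) :
    StrictAntiOn f D :=
  strictAntiOn_of_hasDerivWithinAt_neg hD
    (fun x hx => (hf x hx).continuousAt.continuousWithinAt)
    (fun x hx => (hf x (interior_subset hx)).hasDerivWithinAt)
    fun x hx => hf' x (interior_subset hx)

theorem hasDerivAt_mul_cot_mul {d ℓ : ℝ} (hs : sin (ℓ * d) ≠ 0) :
    HasDerivAt (fun t : ℝ => t * cot (t * d))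
      ((sin (2 * ℓ * d) / 2 - ℓ * d) / sin (ℓ * d) ^ 2) ℓ := by
  have h := (hasDerivAt_id' ℓ).fun_mul
    (((hasDerivAt_mul_const d).cos).fun_div ((hasDerivAt_mul_const d).sin) hs)
  simp only [← cot_eq_cos_div_sin] at h
  refine h.congr_deriv ?_
  rw [show 2 * ℓ * d = 2 * (ℓ * d) by ring, sin_two_mul, cot_eq_cos_div_sin]
  field_simp
  linear_combination (-ℓ * d) * sin_sq_add_cos_sq (ℓ * d)

theorem sin_two_mul_div_two_sub_div_sin_sq_neg {d ℓ : ℝ} (hℓd : 0 < ℓ * d)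
    (hs : sin (ℓ * d) ≠ 0) :
    (sin (2 * ℓ * d) / 2 - ℓ * d) / sin (ℓ * d) ^ 2 < 0 := by
  have h := sin_lt (x := 2 * ℓ * d) (by linarith)
  exact div_neg_of_neg_of_pos (by linarith) (by positivity)

/-- On any open interval in `(0,∞)` avoiding the zeros of `sin(ℓd₁)·sin(ℓd₂)`,
the function `ℓ ↦ ℓ(cot(ℓd₁) + cot(ℓd₂))` is strictly decreasing; moreover
`d/dℓ[ℓ·cot(ℓd)] = (sin(2ℓd)/2 − ℓd)/sin²(ℓd) < 0` for `ℓ, d > 0` with `sin(ℓd) ≠ 0`. -/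
theorem spectral_function_strictAnti
    (d₁ d₂ : ℝ) (hd₁ : 0 < d₁) (hd₂ : 0 < d₂) (lo hi : ℝ)
    (hsub : Set.Ioo lo hi ⊆ Set.Ioi (0 : ℝ))
    (hsin : ∀ ℓ ∈ Set.Ioo lo hi, Real.sin (ℓ * d₁) * Real.sin (ℓ * d₂) ≠ 0) :
    StrictAntiOn (fun ℓ : ℝ => ℓ * (Real.cot (ℓ * d₁) + Real.cot (ℓ * d₂)))
      (Set.Ioo lo hi) ∧
    ∀ d : ℝ, 0 < d → ∀ ℓ : ℝ, 0 < ℓ → Real.sin (ℓ * d) ≠ 0 →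
      HasDerivAt (fun t : ℝ => t * Real.cot (t * d))
        ((Real.sin (2 * ℓ * d) / 2 - ℓ * d) / Real.sin (ℓ * d) ^ 2) ℓ ∧
      (Real.sin (2 * ℓ * d) / 2 - ℓ * d) / Real.sin (ℓ * d) ^ 2 < 0 := by
  refine ⟨?_, fun d hd ℓ hℓ hs =>
    ⟨hasDerivAt_mul_cot_mul hs, sin_two_mul_div_two_sub_div_sin_sq_neg (by positivity) hs⟩⟩
  refine strictAntiOn_of_hasDerivAt_neg (convex_Ioo lo hi)
    (f' := fun ℓ => (sin (2 * ℓ * d₁) / 2 - ℓ * d₁) / sin (ℓ * d₁) ^ 2 +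
      (sin (2 * ℓ * d₂) / 2 - ℓ * d₂) / sin (ℓ * d₂) ^ 2) (fun ℓ hℓ => ?_) fun ℓ hℓ => ?_
  · obtain ⟨hs₁, hs₂⟩ := mul_ne_zero_iff.mp (hsin ℓ hℓ)
    simpa only [mul_add] using (hasDerivAt_mul_cot_mul hs₁).fun_add (hasDerivAt_mul_cot_mul hs₂)
  · have hℓ₀ : 0 < ℓ := hsub hℓ
    obtain ⟨hs₁, hs₂⟩ := mul_ne_zero_iff.mp (hsin ℓ hℓ)
    exact add_neg (sin_two_mul_div_two_sub_div_sin_sq_neg (by positivity) hs₁)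
      (sin_two_mul_div_two_sub_div_sin_sq_neg (by positivity) hs₂)
end

section
/- Let d₁, d₂ > 0 and let I ⊆ (0,∞) be a maximal open interval on which sin(ℓd₁)·sin(ℓd₂) ≠ 0. For each α ∈ ℝ the equation ℓ(cot(ℓd₁) + cot(ℓd₂)) = −α has at most one solution ℓ(α) ∈ I, and on the set of α for which a solution in I exists, the map α ↦ ℓ(α) (equivalently α ↦ ν(α) := ℓ(α)²) is strictly increasing and continuous. -/
open Real

private lemma hasDerivAt_cot_aux (y : ℝ) (hs : Real.sin y ≠ 0) :
    HasDerivAt Real.cot (-(1 / Real.sin y ^ 2)) y := by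
  have h := (Real.hasDerivAt_cos y).div (Real.hasDerivAt_sin y) hs
  have heq : (-Real.sin y * Real.sin y - Real.cos y * Real.cos y) / Real.sin y ^ 2
      = -(1 / Real.sin y ^ 2) := by
    have hpyth : Real.sin y ^ 2 + Real.cos y ^ 2 = 1 := Real.sin_sq_add_cos_sq y
    field_simp
    nlinarith [hpyth]
  have : HasDerivAt (fun x => Real.cos x / Real.sin x) (-(1 / Real.sin y ^ 2)) y := heq ▸ h
  exact this.congr_of_eventuallyEq (by
    filter_upwards with x
    rw [Real.cot_eq_cos_div_sin])

private lemma hasDerivAt_mul_cot (d : ℝ) (x : ℝ) (hs : Real.sin (x * d) ≠ 0) :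
    HasDerivAt (fun ℓ => ℓ * Real.cot (ℓ * d))
      (Real.cot (x * d) - x * d / Real.sin (x * d) ^ 2) x := by
  have h1 : HasDerivAt (fun ℓ : ℝ => ℓ * d) d x := by
    simpa using (hasDerivAt_id x).mul_const d
  have h2 : HasDerivAt (fun ℓ : ℝ => Real.cot (ℓ * d))
      (-(1 / Real.sin (x * d) ^ 2) * d) x :=
    by have := (hasDerivAt_cot_aux (x * d) hs).comp x h1; exact this
  have h3 := (hasDerivAt_id x).mul h2
  have h4 : Real.cot (x * d) - x * d / Real.sin (x * d) ^ 2
      = Real.cot (x * d) + -(x * ((Real.sin (x * d) ^ 2)⁻¹ * d)) := by ring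
  rw [h4]
  simp at h3; exact h3

private lemma deriv_neg_aux (d : ℝ) (hd : 0 < d) (x : ℝ) (hx : 0 < x)
    (hs : Real.sin (x * d) ≠ 0) :
    Real.cot (x * d) - x * d / Real.sin (x * d) ^ 2 < 0 := by
  set y := x * d with hy
  have hy0 : 0 < y := mul_pos hx hd
  have hsin2 : 0 < Real.sin y ^ 2 := by positivity
  have hkey : Real.cos y * Real.sin y < y := by
    have h2y : Real.sin (2 * y) < 2 * y := Real.sin_lt (by linarith)
    have : Real.sin (2 * y) = 2 * Real.sin y * Real.cos y := Real.sin_two_mul y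
    nlinarith
  have heq : Real.cot y - y / Real.sin y ^ 2
      = (Real.cos y * Real.sin y - y) / Real.sin y ^ 2 := by
    rw [Real.cot_eq_cos_div_sin]
    field_simp
  rw [heq]
  exact div_neg_of_neg_of_pos (by linarith) hsin2

/-- On a maximal open interval `I = (lo, hi) ⊆ (0,∞)` avoiding the zeros of
`sin(ℓd₁)·sin(ℓd₂)`, the equation `ℓ(cot(ℓd₁) + cot(ℓd₂)) = −α` has at most one
solution `ℓ(α) ∈ I`, and on the set of `α` for which a solution exists the maps
`α ↦ ℓ(α)` and `α ↦ ν(α) := ℓ(α)²` are strictly increasing and continuous. -/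
theorem transverse_eigenvalue_strictMono_continuous
    (d₁ d₂ : ℝ) (hd₁ : 0 < d₁) (hd₂ : 0 < d₂) (lo hi : ℝ) (hlohi : lo < hi)
    (hsub : Set.Ioo lo hi ⊆ Set.Ioi (0 : ℝ))
    (hsin : ∀ ℓ ∈ Set.Ioo lo hi, Real.sin (ℓ * d₁) * Real.sin (ℓ * d₂) ≠ 0)
    (hmax : ∀ lo' hi' : ℝ, Set.Ioo lo hi ⊆ Set.Ioo lo' hi' →
      Set.Ioo lo' hi' ⊆ Set.Ioi (0 : ℝ) →
      (∀ ℓ ∈ Set.Ioo lo' hi', Real.sin (ℓ * d₁) * Real.sin (ℓ * d₂) ≠ 0) →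
      Set.Ioo lo' hi' = Set.Ioo lo hi) :
    (∀ α : ℝ, ∀ ℓ ∈ Set.Ioo lo hi, ∀ ℓ' ∈ Set.Ioo lo hi,
      ℓ * (Real.cot (ℓ * d₁) + Real.cot (ℓ * d₂)) = -α →
      ℓ' * (Real.cot (ℓ' * d₁) + Real.cot (ℓ' * d₂)) = -α → ℓ = ℓ') ∧
    ∀ L : ℝ → ℝ,
      (∀ α ∈ {α : ℝ | ∃ ℓ ∈ Set.Ioo lo hi,
          ℓ * (Real.cot (ℓ * d₁) + Real.cot (ℓ * d₂)) = -α},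
        L α ∈ Set.Ioo lo hi ∧
        L α * (Real.cot (L α * d₁) + Real.cot (L α * d₂)) = -α) →
      StrictMonoOn L {α : ℝ | ∃ ℓ ∈ Set.Ioo lo hi,
          ℓ * (Real.cot (ℓ * d₁) + Real.cot (ℓ * d₂)) = -α} ∧
      ContinuousOn L {α : ℝ | ∃ ℓ ∈ Set.Ioo lo hi,
          ℓ * (Real.cot (ℓ * d₁) + Real.cot (ℓ * d₂)) = -α} ∧
      StrictMonoOn (fun α : ℝ => (L α) ^ 2) {α : ℝ | ∃ ℓ ∈ Set.Ioo lo hi,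
          ℓ * (Real.cot (ℓ * d₁) + Real.cot (ℓ * d₂)) = -α} ∧
      ContinuousOn (fun α : ℝ => (L α) ^ 2) {α : ℝ | ∃ ℓ ∈ Set.Ioo lo hi,
          ℓ * (Real.cot (ℓ * d₁) + Real.cot (ℓ * d₂)) = -α} := by
  set I := Set.Ioo lo hi with hI
  set f : ℝ → ℝ := fun ℓ => ℓ * (Real.cot (ℓ * d₁) + Real.cot (ℓ * d₂)) with hf
  -- basic facts about sin on I
  have hsin1 : ∀ ℓ ∈ I, Real.sin (ℓ * d₁) ≠ 0 := fun ℓ hℓ =>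
    (mul_ne_zero_iff.mp (hsin ℓ hℓ)).1
  have hsin2 : ∀ ℓ ∈ I, Real.sin (ℓ * d₂) ≠ 0 := fun ℓ hℓ =>
    (mul_ne_zero_iff.mp (hsin ℓ hℓ)).2
  -- f has negative derivative on I
  have hderiv : ∀ x ∈ I, HasDerivAt f
      ((Real.cot (x * d₁) - x * d₁ / Real.sin (x * d₁) ^ 2)
        + (Real.cot (x * d₂) - x * d₂ / Real.sin (x * d₂) ^ 2)) x := by
    intro x hx
    have h := (hasDerivAt_mul_cot d₁ x (hsin1 x hx)).add (hasDerivAt_mul_cot d₂ x (hsin2 x hx))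
    have : f = fun ℓ => ℓ * Real.cot (ℓ * d₁) + ℓ * Real.cot (ℓ * d₂) := by
      funext ℓ; rw [hf]; ring
    rw [this]
    exact h
  have hcont : ContinuousOn f I := fun x hx =>
    ((hderiv x hx).continuousAt).continuousWithinAt
  have hanti : StrictAntiOn f I := by
    apply strictAntiOn_of_deriv_neg (convex_Ioo lo hi) hcont
    intro x hx
    rw [interior_Ioo] at hx
    rw [(hderiv x hx).deriv]
    have hx0 : 0 < x := hsub hx
    have := deriv_neg_aux d₁ hd₁ x hx0 (hsin1 x hx)
    have := deriv_neg_aux d₂ hd₂ x hx0 (hsin2 x hx)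
    linarith
  -- uniqueness
  have huniq : ∀ α : ℝ, ∀ ℓ ∈ I, ∀ ℓ' ∈ I, f ℓ = -α → f ℓ' = -α → ℓ = ℓ' := by
    intro α ℓ hℓ ℓ' hℓ' h1 h2
    exact hanti.injOn hℓ hℓ' (h1.trans h2.symm)
  set S : Set ℝ := {α : ℝ | ∃ ℓ ∈ I, f ℓ = -α} with hS
  -- S is open: S = Neg.neg ⁻¹' (f '' I) and f '' I is open
  have himg_open : IsOpen (f '' I) := by
    rw [isOpen_iff_mem_nhds]
    rintro y ⟨x, hx, rfl⟩
    obtain ⟨hx1, hx2⟩ := hx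
    obtain ⟨x₁, hx₁, hx₁'⟩ := exists_between hx1
    obtain ⟨x₂, hx₂, hx₂'⟩ := exists_between hx2
    have hx₁I : x₁ ∈ I := ⟨hx₁, lt_trans (lt_trans hx₁' hx₂) hx₂'⟩
    have hx₂I : x₂ ∈ I := ⟨lt_trans hx₁ (lt_trans hx₁' hx₂), hx₂'⟩
    have hsubI : Set.Icc x₁ x₂ ⊆ I := fun z hz =>
      ⟨lt_of_lt_of_le hx₁ hz.1, lt_of_le_of_lt hz.2 hx₂'⟩
    have hIVT : Set.Ioo (f x₂) (f x₁) ⊆ f '' Set.Ioo x₁ x₂ :=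
      intermediate_value_Ioo' (le_of_lt (lt_trans hx₁' hx₂)) (hcont.mono hsubI)
    have hmem : f x ∈ Set.Ioo (f x₂) (f x₁) :=
      ⟨hanti ⟨hx1, hx2⟩ hx₂I hx₂, hanti hx₁I ⟨hx1, hx2⟩ hx₁'⟩
    refine Filter.mem_of_superset (Ioo_mem_nhds hmem.1 hmem.2) ?_
    refine hIVT.trans (Set.image_mono ?_)
    exact fun z hz => ⟨lt_trans hx₁ hz.1, lt_trans hz.2 hx₂'⟩
  have hSeq : S = Neg.neg ⁻¹' (f '' I) := by
    ext α
    simp [hS, Set.mem_image]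
  have hSopen : IsOpen S := by
    rw [hSeq]
    exact himg_open.preimage continuous_neg
  constructor
  · exact huniq
  intro L hL
  -- L is strictly monotone on S
  have hmono : StrictMonoOn L S := by
    intro α hα β hβ hαβ
    obtain ⟨hLα, hfα⟩ := hL α hα
    obtain ⟨hLβ, hfβ⟩ := hL β hβ
    have hfα : f (L α) = -α := hfα
    have hfβ : f (L β) = -β := hfβ
    by_contra h
    push_neg at h
    rcases eq_or_lt_of_le h with heq | hlt
    · have : f (L α) = f (L β) := by rw [heq]
      rw [hfα, hfβ] at this
      have : α = β := by linarith [neg_injective this]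
      exact absurd this (ne_of_lt hαβ)
    · have := hanti hLβ hLα hlt
      rw [hfα, hfβ] at this
      linarith
  -- L '' S = I
  have hLimg : ∀ ℓ ∈ I, ∃ α ∈ S, L α = ℓ := by
    intro ℓ hℓ
    refine ⟨-(f ℓ), ⟨ℓ, hℓ, by ring⟩, ?_⟩
    obtain ⟨hLmem, hLeq⟩ := hL (-(f ℓ)) ⟨ℓ, hℓ, by ring⟩
    exact huniq (-(f ℓ)) (L (-(f ℓ))) hLmem ℓ hℓ hLeq (by ring)
  have hLimg' : L '' S = I := by
    apply Set.Subset.antisymm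
    · rintro _ ⟨α, hα, rfl⟩
      exact (hL α hα).1
    · intro ℓ hℓ
      obtain ⟨α, hα, hαℓ⟩ := hLimg ℓ hℓ
      exact ⟨α, hα, hαℓ⟩
  -- continuity of L on S
  have hLcont : ContinuousOn L S := by
    intro α hα
    have hca : ContinuousAt L α := by
      apply hmono.continuousAt_of_image_mem_nhds (hSopen.mem_nhds hα)
      rw [hLimg']
      exact isOpen_Ioo.mem_nhds (hL α hα).1
    exact hca.continuousWithinAt
  have hLpos : ∀ α ∈ S, 0 < L α := fun α hα => hsub (hL α hα).1
  refine ⟨hmono, hLcont, ?_, ?_⟩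
  · intro α hα β hβ hαβ
    have h1 := hLpos α hα
    have h2 := hmono hα hβ hαβ
    simp only
    nlinarith
  · exact (hLcont.pow 2)
end

section
/- Let d₁, d₂ > 0, D := d₁ + d₂, and let a, b > 0 with a² ≠ b², sin(ad₁)·sin(ad₂) ≠ 0, sin(bd₁)·sin(bd₂) ≠ 0, and suppose −α₀ = a(cot(ad₁) + cot(ad₂)) and −α₁ = b(cot(bd₁) + cot(bd₂)) for some α₀, α₁ ∈ ℝ. Define χ_a on [−d₂,d₁] by χ_a(y) = sin(ad₂)·sin(a(y−d₁)) for y ∈ [0,d₁] and χ_a(y) = −sin(ad₁)·sin(a(y+d₂)) for y ∈ [−d₂,0], and define χ_b analogously with b in place of a. Then ∫_{−d₂}^{d₁} χ_a(y)·χ_b(y) dy = (α₀ − α₁)·χ_a(0)·χ_b(0)/(a² − b²) = (b·sin(ad₁)·sin(ad₂)·sin(bD) − a·sin(bd₁)·sin(bd₂)·sin(aD))/(a² − b²). -/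
open Real

lemma sinsin_int (a b : ℝ) (hab : a ^ 2 ≠ b ^ 2) (p q : ℝ) :
    ∫ u in p..q, Real.sin (a * u) * Real.sin (b * u)
      = (a * Real.cos (a * q) * Real.sin (b * q) - b * Real.sin (a * q) * Real.cos (b * q))
          / (b ^ 2 - a ^ 2)
        - (a * Real.cos (a * p) * Real.sin (b * p) - b * Real.sin (a * p) * Real.cos (b * p))
          / (b ^ 2 - a ^ 2) := by
  have hne : b ^ 2 - a ^ 2 ≠ 0 := sub_ne_zero.2 (fun h => hab h.symm)
  apply intervalIntegral.integral_eq_sub_of_hasDerivAt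
  · intro x _
    have h1 : HasDerivAt (fun u : ℝ => Real.sin (a * u)) (a * Real.cos (a * x)) x := by
      simpa [mul_comm, Function.comp_def] using ((Real.hasDerivAt_sin (a * x)).comp x ((hasDerivAt_id x).const_mul a))
    have h2 : HasDerivAt (fun u : ℝ => Real.cos (a * u)) (-(a * Real.sin (a * x))) x := by
      simpa [mul_comm, Function.comp_def] using ((Real.hasDerivAt_cos (a * x)).comp x ((hasDerivAt_id x).const_mul a))
    have h3 : HasDerivAt (fun u : ℝ => Real.sin (b * u)) (b * Real.cos (b * x)) x := by
      simpa [mul_comm, Function.comp_def] using ((Real.hasDerivAt_sin (b * x)).comp x ((hasDerivAt_id x).const_mul b))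
    have h4 : HasDerivAt (fun u : ℝ => Real.cos (b * u)) (-(b * Real.sin (b * x))) x := by
      simpa [mul_comm, Function.comp_def] using ((Real.hasDerivAt_cos (b * x)).comp x ((hasDerivAt_id x).const_mul b))
    have hnum : HasDerivAt
        (fun u : ℝ => a * Real.cos (a * u) * Real.sin (b * u)
            - b * Real.sin (a * u) * Real.cos (b * u))
        ((b ^ 2 - a ^ 2) * (Real.sin (a * x) * Real.sin (b * x))) x := by
      have := (((h2.const_mul a).mul h3).sub ((h1.const_mul b).mul h4))
      refine this.congr_deriv ?_
      ring
    have := hnum.div_const (b ^ 2 - a ^ 2)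
    simpa [mul_div_assoc, mul_comm, mul_div_cancel_left₀ _ hne] using this
  · exact (Continuous.mul (by continuity) (by continuity)).intervalIntegrable _ _

lemma chi_cont (a c₁ c₂ : ℝ) :
    Continuous (fun y : ℝ =>
      if 0 ≤ y then Real.sin (a * c₂) * Real.sin (a * (y - c₁))
      else -(Real.sin (a * c₁) * Real.sin (a * (y + c₂)))) := by
  apply Continuous.if
  · intro y hy
    rw [show {x : ℝ | 0 ≤ x} = Set.Ici 0 from rfl, frontier_Ici] at hy
    rw [Set.mem_singleton_iff] at hy
    subst hy
    simp [Real.sin_neg]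
    ring
  · continuity
  · continuity

/-- The overlap integral of two transverse eigenfunctions corresponding to
different barrier strengths `α₀`, `α₁`:
`∫ χ_a χ_b = (α₀ − α₁) χ_a(0) χ_b(0)/(a² − b²)` and equals the explicit
trigonometric expression with `D = d₁ + d₂`. -/
theorem overlap_integral
    (d₁ d₂ α₀ α₁ a b : ℝ) (hd₁ : 0 < d₁) (hd₂ : 0 < d₂)
    (ha : 0 < a) (hb : 0 < b) (hab : a ^ 2 ≠ b ^ 2)
    (hsa : Real.sin (a * d₁) * Real.sin (a * d₂) ≠ 0)
    (hsb : Real.sin (b * d₁) * Real.sin (b * d₂) ≠ 0)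
    (hα₀ : -α₀ = a * (Real.cot (a * d₁) + Real.cot (a * d₂)))
    (hα₁ : -α₁ = b * (Real.cot (b * d₁) + Real.cot (b * d₂)))
    (χa χb : ℝ → ℝ)
    (hχa : χa = fun y : ℝ =>
      if 0 ≤ y then Real.sin (a * d₂) * Real.sin (a * (y - d₁))
      else -(Real.sin (a * d₁) * Real.sin (a * (y + d₂))))
    (hχb : χb = fun y : ℝ =>
      if 0 ≤ y then Real.sin (b * d₂) * Real.sin (b * (y - d₁))
      else -(Real.sin (b * d₁) * Real.sin (b * (y + d₂)))) :
    (∫ y in (-d₂)..d₁, χa y * χb y)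
        = (α₀ - α₁) * χa 0 * χb 0 / (a ^ 2 - b ^ 2) ∧
    (∫ y in (-d₂)..d₁, χa y * χb y)
        = (b * Real.sin (a * d₁) * Real.sin (a * d₂) * Real.sin (b * (d₁ + d₂))
            - a * Real.sin (b * d₁) * Real.sin (b * d₂) * Real.sin (a * (d₁ + d₂)))
          / (a ^ 2 - b ^ 2) := by
  have hne : a ^ 2 - b ^ 2 ≠ 0 := sub_ne_zero.2 hab
  have hne' : b ^ 2 - a ^ 2 ≠ 0 := sub_ne_zero.2 (fun h => hab h.symm)
  have hca : Continuous χa := by rw [hχa]; exact chi_cont a d₁ d₂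
  have hcb : Continuous χb := by rw [hχb]; exact chi_cont b d₁ d₂
  have hcprod : Continuous (fun y => χa y * χb y) := hca.mul hcb
  -- split the integral
  have hsplit : (∫ y in (-d₂)..d₁, χa y * χb y)
      = (∫ y in (-d₂)..(0:ℝ), χa y * χb y) + ∫ y in (0:ℝ)..d₁, χa y * χb y :=
    (intervalIntegral.integral_add_adjacent_intervals
      (hcprod.intervalIntegrable _ _) (hcprod.intervalIntegrable _ _)).symm
  -- left piece
  have hA : (∫ y in (-d₂)..(0:ℝ), χa y * χb y)
      = (Real.sin (a * d₁) * Real.sin (b * d₁)) *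
          ∫ u in (0:ℝ)..d₂, Real.sin (a * u) * Real.sin (b * u) := by
    have hEq : Set.EqOn (fun y => χa y * χb y)
        (fun y => (Real.sin (a * d₁) * Real.sin (b * d₁)) *
          (Real.sin (a * (y + d₂)) * Real.sin (b * (y + d₂))))
        (Set.uIcc (-d₂) (0:ℝ)) := by
      intro y hy
      rw [Set.uIcc_of_le (by linarith)] at hy
      rcases lt_or_eq_of_le hy.2 with h0 | h0
      · simp only [hχa, hχb, if_neg (not_le.2 h0)]
        ring
      · subst h0
        simp only [hχa, hχb, if_pos le_rfl]
        simp [Real.sin_neg]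
        ring
    rw [intervalIntegral.integral_congr hEq, intervalIntegral.integral_const_mul]
    congr 1
    have := intervalIntegral.integral_comp_add_right
      (a := -d₂) (b := (0:ℝ)) (d := d₂)
      (fun u => Real.sin (a * u) * Real.sin (b * u))
    simpa using this
  -- right piece
  have hB : (∫ y in (0:ℝ)..d₁, χa y * χb y)
      = (Real.sin (a * d₂) * Real.sin (b * d₂)) *
          ∫ u in (-d₁)..(0:ℝ), Real.sin (a * u) * Real.sin (b * u) := by
    have hEq : Set.EqOn (fun y => χa y * χb y)
        (fun y => (Real.sin (a * d₂) * Real.sin (b * d₂)) *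
          (Real.sin (a * (y - d₁)) * Real.sin (b * (y - d₁))))
        (Set.uIcc (0:ℝ) d₁) := by
      intro y hy
      rw [Set.uIcc_of_le (by linarith)] at hy
      simp only [hχa, hχb, if_pos hy.1]
      ring
    rw [intervalIntegral.integral_congr hEq, intervalIntegral.integral_const_mul]
    congr 1
    have := intervalIntegral.integral_comp_sub_right
      (a := (0:ℝ)) (b := d₁) (d := d₁)
      (fun u => Real.sin (a * u) * Real.sin (b * u))
    simpa using this
  rw [hsplit, hA, hB, sinsin_int a b hab, sinsin_int a b hab]
  -- explicit value
  have key : (Real.sin (a * d₁) * Real.sin (b * d₁)) *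
        ((a * Real.cos (a * d₂) * Real.sin (b * d₂)
            - b * Real.sin (a * d₂) * Real.cos (b * d₂)) / (b ^ 2 - a ^ 2)
          - (a * Real.cos (a * 0) * Real.sin (b * 0)
            - b * Real.sin (a * 0) * Real.cos (b * 0)) / (b ^ 2 - a ^ 2))
      + (Real.sin (a * d₂) * Real.sin (b * d₂)) *
        ((a * Real.cos (a * 0) * Real.sin (b * 0)
            - b * Real.sin (a * 0) * Real.cos (b * 0)) / (b ^ 2 - a ^ 2)
          - (a * Real.cos (a * -d₁) * Real.sin (b * -d₁)
            - b * Real.sin (a * -d₁) * Real.cos (b * -d₁)) / (b ^ 2 - a ^ 2))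
      = (b * Real.sin (a * d₁) * Real.sin (a * d₂) * Real.sin (b * (d₁ + d₂))
            - a * Real.sin (b * d₁) * Real.sin (b * d₂) * Real.sin (a * (d₁ + d₂)))
          / (a ^ 2 - b ^ 2) := by
    rw [show a * (d₁ + d₂) = a * d₁ + a * d₂ by ring,
        show b * (d₁ + d₂) = b * d₁ + b * d₂ by ring,
        Real.sin_add, Real.sin_add]
    simp only [mul_zero, Real.sin_zero, Real.cos_zero, mul_neg, Real.sin_neg, Real.cos_neg]
    field_simp
    ring
  refine ⟨?_, key⟩
  rw [key]
  -- now the first identity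
  have ha1 : Real.sin (a * d₁) ≠ 0 := fun h => hsa (by rw [h]; ring)
  have ha2 : Real.sin (a * d₂) ≠ 0 := fun h => hsa (by rw [h]; ring)
  have hb1 : Real.sin (b * d₁) ≠ 0 := fun h => hsb (by rw [h]; ring)
  have hb2 : Real.sin (b * d₂) ≠ 0 := fun h => hsb (by rw [h]; ring)
  rw [Real.cot_eq_cos_div_sin, Real.cot_eq_cos_div_sin] at hα₀ hα₁
  have e0 : α₀ * (Real.sin (a * d₁) * Real.sin (a * d₂))
      = -(a * Real.sin (a * (d₁ + d₂))) := by
    rw [show a * (d₁ + d₂) = a * d₁ + a * d₂ by ring, Real.sin_add]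
    field_simp at hα₀
    linarith [hα₀]
  have e1 : α₁ * (Real.sin (b * d₁) * Real.sin (b * d₂))
      = -(b * Real.sin (b * (d₁ + d₂))) := by
    rw [show b * (d₁ + d₂) = b * d₁ + b * d₂ by ring, Real.sin_add]
    field_simp at hα₁
    linarith [hα₁]
  have hχa0 : χa 0 = -(Real.sin (a * d₂) * Real.sin (a * d₁)) := by
    simp [hχa, Real.sin_neg]
  have hχb0 : χb 0 = -(Real.sin (b * d₂) * Real.sin (b * d₁)) := by
    simp [hχb, Real.sin_neg]
  rw [hχa0, hχb0, div_eq_div_iff hne hne]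
  linear_combination (-(a ^ 2 - b ^ 2) * (Real.sin (b * d₁) * Real.sin (b * d₂))) * e0
    + ((a ^ 2 - b ^ 2) * (Real.sin (a * d₁) * Real.sin (a * d₂))) * e1
end

section
/- Let d₁, d₂ > 0, α₀ ∈ ℝ, ν ∈ ℝ, and let χ : [−d₂,d₁] → ℝ be continuous, twice continuously differentiable on [−d₂,0] and on [0,d₁], with χ(−d₂) = χ(d₁) = 0, −χ″ = νχ on (−d₂,0) ∪ (0,d₁), χ′(0+) − χ′(0−) = α₀·χ(0), ∫_{−d₂}^{d₁} χ² dy = 1, and χ(0) ≠ 0. Let ε > 0 and let α : ℝ → ℝ be measurable such that α − α₀ is integrable on ℝ, |α(x) − α₀| ≤ C·|x|^{−1−ε} for some C > 0 and all |x| ≥ 1, and ∫_ℝ (α(x) − α₀) dx < 0. Then there exist a > 1, σ ∈ (0,1], and a Schwartz function φ : ℝ → ℝ with |φ| ≤ 1 and φ = 1 on [−a,a], such that the function Ψ(x,y) := φ_σ(x)·χ(y), where φ_σ is the exterior scaling of φ, satisfies ∫_ℝ ∫_{−d₂}^{d₁} (|∂_xΨ|² + |∂_yΨ|²) dy dx +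 ∫_ℝ α(x)·Ψ(x,0)² dx < ν·∫_ℝ ∫_{−d₂}^{d₁} Ψ(x,y)² dy dx (the y-integral of |∂_yΨ|² taken over (−d₂,0) ∪ (0,d₁), and ∂_xΨ understood as the a.e.-defined derivative of the piecewise-C¹ function φ_σ times χ). -/
open Real MeasureTheory

/-- The exterior scaling of a function `φ : ℝ → ℝ`: it coincides with `φ` on
`[−a, a]` and is scaled by `σ` outside. -/
noncomputable def extScaling (a σ : ℝ) (φ : ℝ → ℝ) : ℝ → ℝ := fun x =>
  if |x| ≤ a then φ x
  else if a < x then φ (a + σ * (x - a))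
  else φ (-a + σ * (x + a))

/-- A compactly supported smooth bump function as a Schwartz map. -/
noncomputable def ContDiffBump.toSchwartz (c : ContDiffBump (0:ℝ)) : SchwartzMap ℝ ℝ where
  toFun := c
  smooth' := c.contDiff
  decay' := by
    intro k n
    have h1 : Continuous fun x : ℝ => ‖x‖ ^ k * ‖iteratedFDeriv ℝ n (⇑c) x‖ :=
      (continuous_norm.pow k).mul
        ((c.contDiff (n := ⊤)).continuous_iteratedFDeriv (by exact_mod_cast le_top)).norm
    have h2 : HasCompactSupport fun x : ℝ => ‖x‖ ^ k * ‖iteratedFDeriv ℝ n (⇑c) x‖ :=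
      (c.hasCompactSupport.iteratedFDeriv n).norm.mul_left
    obtain ⟨C, hC⟩ := h2.exists_bound_of_continuous h1
    exact ⟨C, fun x => by simpa using hC x⟩

/-- Integration by parts for an eigenfunction: `∫ f'² = [f f'] + ν ∫ f²`. -/
lemma ibp_eigen (c d ν : ℝ) (hcd : c ≤ d) (f f' : ℝ → ℝ)
    (hf : ∀ y ∈ Set.Icc c d, HasDerivWithinAt f (f' y) (Set.Icc c d) y)
    (hf'' : ∀ y ∈ Set.Icc c d, HasDerivWithinAt f' (-(ν * f y)) (Set.Icc c d) y) :
    (∫ y in c..d, f' y ^ 2)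
      = f d * f' d - f c * f' c + ν * ∫ y in c..d, f y ^ 2 := by
  have hfc : ContinuousOn f (Set.Icc c d) := fun y hy => (hf y hy).continuousWithinAt
  have hf'c : ContinuousOn f' (Set.Icc c d) := fun y hy => (hf'' y hy).continuousWithinAt
  have huIcc : Set.uIcc c d = Set.Icc c d := Set.uIcc_of_le hcd
  have hint1 : IntervalIntegrable (fun y => f' y ^ 2) volume c d := by
    apply ContinuousOn.intervalIntegrable; rw [huIcc]; exact hf'c.pow 2
  have hint2 : IntervalIntegrable (fun y => f y ^ 2) volume c d := by
    apply ContinuousOn.intervalIntegrable; rw [huIcc]; exact hfc.pow 2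
  have key : (∫ y in c..d, (f' y ^ 2 - ν * f y ^ 2)) = f d * f' d - f c * f' c := by
    apply intervalIntegral.integral_eq_sub_of_hasDerivAt_of_le hcd (hfc.mul hf'c)
    · intro x hx
      have hx' : x ∈ Set.Icc c d := Set.Ioo_subset_Icc_self hx
      have hmem : Set.Icc c d ∈ nhds x := Icc_mem_nhds hx.1 hx.2
      have h1 : HasDerivAt f (f' x) x := (hf x hx').hasDerivAt hmem
      have h2 : HasDerivAt f' (-(ν * f x)) x := (hf'' x hx').hasDerivAt hmem
      have h3 := h1.mul h2
      convert h3 using 1; rfl; ring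
    · exact hint1.sub (hint2.const_mul ν)
  rw [intervalIntegral.integral_sub hint1 (hint2.const_mul ν),
    intervalIntegral.integral_const_mul] at key
  linarith

set_option maxHeartbeats 2000000 in
/-- Variational core of the bound-state existence theorem: if the coupling
function `α` tends to `α₀` with `|α(x) − α₀| = O(|x|^{−1−ε})` and is attractive
in the mean, and `χ` is a normalized transverse eigenfunction with eigenvalue
`ν`, coupling `α₀`, and `χ(0) ≠ 0`, then the shifted quadratic form is negative
on the trial function `Ψ(x,y) = φ_σ(x)χ(y)` for a suitable exterior-scaled
Schwartz cutoff `φ_σ`. -/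
theorem trial_function_negative_energy
    (d₁ d₂ α₀ ν : ℝ) (hd₁ : 0 < d₁) (hd₂ : 0 < d₂)
    (χ χ'₁ χ'₂ : ℝ → ℝ)
    (hχcont : ContinuousOn χ (Set.Icc (-d₂) d₁))
    (hχ'₁ : ∀ y ∈ Set.Icc (-d₂) (0 : ℝ),
      HasDerivWithinAt χ (χ'₁ y) (Set.Icc (-d₂) (0 : ℝ)) y)
    (hχ''₁ : ∀ y ∈ Set.Icc (-d₂) (0 : ℝ),
      HasDerivWithinAt χ'₁ (-(ν * χ y)) (Set.Icc (-d₂) (0 : ℝ)) y)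
    (hχ'₂ : ∀ y ∈ Set.Icc (0 : ℝ) d₁,
      HasDerivWithinAt χ (χ'₂ y) (Set.Icc (0 : ℝ) d₁) y)
    (hχ''₂ : ∀ y ∈ Set.Icc (0 : ℝ) d₁,
      HasDerivWithinAt χ'₂ (-(ν * χ y)) (Set.Icc (0 : ℝ) d₁) y)
    (hdir₁ : χ (-d₂) = 0) (hdir₂ : χ d₁ = 0)
    (hjump : χ'₂ 0 - χ'₁ 0 = α₀ * χ 0)
    (hnorm : (∫ y in (-d₂)..d₁, χ y ^ 2) = 1)
    (hχ0 : χ 0 ≠ 0)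
    (ε : ℝ) (hε : 0 < ε) (α : ℝ → ℝ) (hαm : Measurable α)
    (hα1 : Integrable (fun x : ℝ => α x - α₀))
    (hαdecay : ∃ C : ℝ, 0 < C ∧ ∀ x : ℝ, 1 ≤ |x| →
      |α x - α₀| ≤ C * |x| ^ (-1 - ε))
    (hαneg : (∫ x : ℝ, (α x - α₀)) < 0) :
    ∃ (a σ : ℝ) (φ : SchwartzMap ℝ ℝ), 1 < a ∧ 0 < σ ∧ σ ≤ 1 ∧
      (∀ x : ℝ, |φ x| ≤ 1) ∧ (∀ x : ℝ, |x| ≤ a → φ x = 1) ∧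
      (∫ x : ℝ, ∫ y in (-d₂)..d₁, (deriv (extScaling a σ ⇑φ) x * χ y) ^ 2)
        + (∫ x : ℝ, ((∫ y in (-d₂)..(0 : ℝ), (extScaling a σ ⇑φ x * χ'₁ y) ^ 2)
            + ∫ y in (0 : ℝ)..d₁, (extScaling a σ ⇑φ x * χ'₂ y) ^ 2))
        + (∫ x : ℝ, α x * (extScaling a σ ⇑φ x * χ 0) ^ 2)
        < ν * ∫ x : ℝ, ∫ y in (-d₂)..d₁, (extScaling a σ ⇑φ x * χ y) ^ 2 := by
  classical
  -- ## Transverse identity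
  have hcd1 : (-d₂ : ℝ) ≤ 0 := by linarith
  have hIcc1 : Set.Icc (-d₂) (0:ℝ) ⊆ Set.Icc (-d₂) d₁ := Set.Icc_subset_Icc le_rfl hd₁.le
  have hIcc2 : Set.Icc (0:ℝ) d₁ ⊆ Set.Icc (-d₂) d₁ := Set.Icc_subset_Icc hcd1 le_rfl
  have hχint1 : IntervalIntegrable (fun y => χ y ^ 2) volume (-d₂) 0 := by
    apply ContinuousOn.intervalIntegrable; rw [Set.uIcc_of_le hcd1]
    exact (hχcont.mono hIcc1).pow 2
  have hχint2 : IntervalIntegrable (fun y => χ y ^ 2) volume 0 d₁ := by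
    apply ContinuousOn.intervalIntegrable; rw [Set.uIcc_of_le hd₁.le]
    exact (hχcont.mono hIcc2).pow 2
  have hN : (∫ y in (-d₂)..(0:ℝ), χ y ^ 2) + (∫ y in (0:ℝ)..d₁, χ y ^ 2) = 1 := by
    rw [intervalIntegral.integral_add_adjacent_intervals hχint1 hχint2, hnorm]
  have hJ1 := ibp_eigen (-d₂) 0 ν hcd1 χ χ'₁ hχ'₁ hχ''₁
  have hJ2 := ibp_eigen 0 d₁ ν hd₁.le χ χ'₂ hχ'₂ hχ''₂
  rw [hdir₁] at hJ1
  rw [hdir₂] at hJ2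
  have hJ : (∫ y in (-d₂)..(0:ℝ), χ'₁ y ^ 2) + (∫ y in (0:ℝ)..d₁, χ'₂ y ^ 2)
      = ν - α₀ * χ 0 ^ 2 := by
    have hh : χ 0 * χ'₂ 0 - χ 0 * χ'₁ 0 = α₀ * χ 0 ^ 2 := by
      have := congrArg (fun t => χ 0 * t) hjump
      simp only [mul_sub] at this
      rw [this]; ring
    have hvN : ν * (∫ y in (-d₂)..(0:ℝ), χ y ^ 2) + ν * (∫ y in (0:ℝ)..d₁, χ y ^ 2) = ν := by
      rw [← mul_add, hN, mul_one]
    rw [hJ1, hJ2]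
    linarith [hh, hvN]
  -- ## Choice of `a`
  set I := ∫ x : ℝ, (α x - α₀) with hIdef
  have habs : Integrable (fun x : ℝ => |α x - α₀|) := hα1.abs
  have hA : Filter.Tendsto (fun a : ℝ => ∫ x in Set.Icc (-a) a, (α x - α₀))
      Filter.atTop (nhds I) := by
    have h := MeasureTheory.intervalIntegral_tendsto_integral hα1
      Filter.tendsto_neg_atTop_atBot Filter.tendsto_id
    refine h.congr' ?_
    filter_upwards [Filter.eventually_ge_atTop (0:ℝ)] with b hb
    simp only [id_eq]
    rw [intervalIntegral.integral_of_le (by linarith), ← integral_Icc_eq_integral_Ioc]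
  have hB' : Filter.Tendsto (fun a : ℝ => ∫ x in Set.Icc (-a) a, |α x - α₀|)
      Filter.atTop (nhds (∫ x : ℝ, |α x - α₀|)) := by
    have h := MeasureTheory.intervalIntegral_tendsto_integral habs
      Filter.tendsto_neg_atTop_atBot Filter.tendsto_id
    refine h.congr' ?_
    filter_upwards [Filter.eventually_ge_atTop (0:ℝ)] with b hb
    simp only [id_eq]
    rw [intervalIntegral.integral_of_le (by linarith), ← integral_Icc_eq_integral_Ioc]
  have hTail : Filter.Tendsto (fun a : ℝ => ∫ x in (Set.Icc (-a) a)ᶜ, |α x - α₀|)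
      Filter.atTop (nhds 0) := by
    have h := (tendsto_const_nhds (x := ∫ x : ℝ, |α x - α₀|)
      (f := (Filter.atTop : Filter ℝ))).sub hB'
    rw [sub_self] at h
    refine h.congr fun b => ?_
    have h2 := integral_add_compl (measurableSet_Icc (a := -b) (b := b)) habs
    linarith
  have hsum : Filter.Tendsto
      (fun a : ℝ => (∫ x in Set.Icc (-a) a, (α x - α₀))
        + ∫ x in (Set.Icc (-a) a)ᶜ, |α x - α₀|) Filter.atTop (nhds I) := by
    simpa using hA.add hTail
  have hIlt : I < I / 2 := by linarith
  obtain ⟨a, ha1, haS⟩ : ∃ a : ℝ, 1 < a ∧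
      (∫ x in Set.Icc (-a) a, (α x - α₀)) + (∫ x in (Set.Icc (-a) a)ᶜ, |α x - α₀|) < I / 2 := by
    have h1 := hsum.eventually_lt_const hIlt
    exact ((Filter.eventually_gt_atTop (1:ℝ)).and h1).exists
  have ha0 : (0:ℝ) < a := by linarith
  -- ## Bump function and Schwartz cutoff
  obtain ⟨c, hcIn, hcOut⟩ : ∃ c : ContDiffBump (0:ℝ), c.rIn = 2*a ∧ c.rOut = 3*a :=
    ⟨⟨2*a, 3*a, by linarith, by linarith⟩, rfl, rfl⟩
  obtain ⟨φ, hφdef⟩ : ∃ φ : SchwartzMap ℝ ℝ, φ = c.toSchwartz := ⟨_, rfl⟩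
  have hφeq : ∀ x : ℝ, φ x = c x := fun x => by rw [hφdef]; rfl
  have hφ1 : ∀ x : ℝ, |x| ≤ 2*a → φ x = 1 := by
    intro x hx
    rw [hφeq]
    exact c.one_of_mem_closedBall
      (by simpa [Metric.mem_closedBall, Real.dist_eq, hcIn] using hx)
  have hφ0 : ∀ x : ℝ, 3*a ≤ |x| → φ x = 0 := by
    intro x hx
    rw [hφeq]
    exact c.zero_of_le_dist (by simpa [Real.dist_eq, hcOut] using hx)
  have hφmem : ∀ x : ℝ, 0 ≤ φ x ∧ φ x ≤ 1 := fun x => by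
    rw [hφeq]; exact ⟨c.nonneg, c.le_one⟩
  have hφdiff : Differentiable ℝ (⇑φ) := φ.differentiable
  obtain ⟨M, hM⟩ : ∃ M : ℝ, ∀ t : ℝ, |deriv (⇑φ) t| ≤ M := by
    obtain ⟨C, hC⟩ := (SchwartzMap.derivCLM ℝ ℝ φ).decay' 0 0
    refine ⟨C, fun t => ?_⟩
    have := hC t
    change ‖t‖ ^ 0 * ‖iteratedFDeriv ℝ 0 (fun x => deriv (⇑φ) x) t‖ ≤ C at this
    simpa [norm_iteratedFDeriv_zero, SchwartzMap.derivCLM_apply] using this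
  have hM0 : 0 ≤ M := le_trans (abs_nonneg _) (hM 0)
  have hφ'0 : ∀ t : ℝ, 3*a < |t| → deriv (⇑φ) t = 0 := by
    intro t ht
    rcases lt_abs.mp ht with h | h
    · have hev : (⇑φ) =ᶠ[nhds t] fun _ => (0:ℝ) := by
        filter_upwards [Ioi_mem_nhds h] with y hy
        have hy' : 3*a < y := hy
        exact hφ0 y (by rw [abs_of_pos (by linarith)]; linarith)
      rw [hev.deriv_eq]; exact deriv_const t 0
    · have ht' : t < -(3*a) := by linarith
      have hev : (⇑φ) =ᶠ[nhds t] fun _ => (0:ℝ) := by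
        filter_upwards [Iio_mem_nhds ht'] with y hy
        have hy' : y < -(3*a) := hy
        exact hφ0 y (by rw [abs_of_neg (by linarith)]; linarith)
      rw [hev.deriv_eq]; exact deriv_const t 0
  -- ## Choice of `σ`
  have hχ0sq : 0 < χ 0 ^ 2 := by
    have := pow_pos (abs_pos.mpr hχ0) 2
    simpa [sq_abs] using this
  obtain ⟨K, hKdef⟩ : ∃ K : ℝ, K = 8*a*M^2 := ⟨_, rfl⟩
  have hK0 : 0 ≤ K := by rw [hKdef]; positivity
  obtain ⟨P, hPdef⟩ : ∃ P : ℝ, P = χ 0 ^ 2 * (-(I/2)) := ⟨_, rfl⟩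
  have hP0 : 0 < P := hPdef ▸ mul_pos hχ0sq (by linarith)
  obtain ⟨σ, hσdef⟩ : ∃ s : ℝ, s = min 1 (P/(2*(K+1))) := ⟨_, rfl⟩
  have hσ0 : 0 < σ := by
    rw [hσdef]; exact lt_min one_pos (by positivity)
  have hσ1 : σ ≤ 1 := by rw [hσdef]; exact min_le_left _ _
  have hσK : σ * (K+1) ≤ P/2 := by
    have h1 : σ ≤ P/(2*(K+1)) := by rw [hσdef]; exact min_le_right _ _
    have h2 : σ * (K+1) ≤ (P/(2*(K+1))) * (K+1) :=
      mul_le_mul_of_nonneg_right h1 (by linarith)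
    have h3 : (P/(2*(K+1))) * (K+1) = P/2 := by field_simp
    linarith
  refine ⟨a, σ, φ, ha1, hσ0, hσ1, ?_, ?_, ?_⟩
  · intro x
    obtain ⟨h0, h1⟩ := hφmem x
    rw [abs_le]; constructor <;> linarith
  · intro x hx
    exact hφ1 x (by linarith)
  -- ## The quadratic form estimate
  obtain ⟨F, hFdef⟩ : ∃ F : ℝ → ℝ, F = extScaling a σ (⇑φ) := ⟨_, rfl⟩
  rw [← hFdef]
  obtain ⟨D, hDdef⟩ : ∃ D : ℝ → ℝ, D = deriv F := ⟨_, rfl⟩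
  rw [← hDdef]
  have hσa : 0 < a/σ := by positivity
  have hcan1 : σ * (a/σ) = a := by
    rw [mul_comm]; exact div_mul_cancel₀ a (ne_of_gt hσ0)
  have hcan3 : σ * (3*a/σ) = 3*a := by
    rw [mul_comm]; exact div_mul_cancel₀ (3*a) (ne_of_gt hσ0)
  obtain ⟨B, hBdef⟩ : ∃ B : ℝ, B = a + 3*a/σ := ⟨_, rfl⟩
  have haB : a < B := by
    have h : 0 < 3*a/σ := by positivity
    rw [hBdef]; linarith
  have hB0 : 0 < B := by linarith
  -- pointwise description of F
  have hF1 : ∀ x : ℝ, |x| ≤ a → F x = 1 := by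
    intro x hx
    rw [hFdef]
    simp only [extScaling, if_pos hx]
    exact hφ1 x (by linarith)
  have hFone' : ∀ x : ℝ, |x| < a + a/σ → F x = 1 := by
    intro x hx
    rcases le_or_gt |x| a with h | h
    · exact hF1 x h
    · rw [hFdef]
      rcases lt_abs.mp h with h2 | h2
      · have hxa : ¬ |x| ≤ a := not_le.mpr h
        simp only [extScaling, if_neg hxa, if_pos h2]
        apply hφ1
        have hx' : x < a + a/σ := lt_of_le_of_lt (le_abs_self x) hx
        have h3 : σ * (x - a) < a := by
          have hm := mul_lt_mul_of_pos_left (show x - a < a/σ by linarith) hσ0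
          rwa [hcan1] at hm
        have h4 : 0 < σ * (x - a) := mul_pos hσ0 (by linarith)
        rw [abs_of_pos (by linarith)]
        linarith
      · have hx2 : x < -a := by linarith
        have hxa : ¬ |x| ≤ a := not_le.mpr h
        have hxa2 : ¬ a < x := by linarith
        simp only [extScaling, if_neg hxa, if_neg hxa2]
        apply hφ1
        have hx' : -(a + a/σ) < x := neg_lt_of_abs_lt hx
        have h3 : -a < σ * (x + a) := by
          have hm := mul_lt_mul_of_pos_left (show -(a/σ) < x + a by linarith) hσ0
          rw [mul_neg, hcan1] at hm
          linarith
        have h4 : σ * (x + a) < 0 := mul_neg_of_pos_of_neg hσ0 (by linarith)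
        rw [abs_of_neg (by linarith)]
        linarith
  have hFmem : ∀ x : ℝ, 0 ≤ F x ∧ F x ≤ 1 := by
    intro x
    rw [hFdef]
    simp only [extScaling]
    split_ifs <;> exact hφmem _
  have hFzero : ∀ x : ℝ, B < |x| → F x = 0 := by
    intro x hx
    have hxa : ¬ |x| ≤ a := by push_neg; linarith
    rcases lt_abs.mp hx with h | h
    · have hax : a < x := by linarith
      rw [hFdef]; simp only [extScaling, if_neg hxa, if_pos hax]
      apply hφ0
      have h3 : 3*a < σ * (x - a) := by
        have hm := mul_lt_mul_of_pos_left
          (show 3*a/σ < x - a by rw [hBdef] at h; linarith) hσ0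
        rwa [hcan3] at hm
      rw [abs_of_pos (by linarith)]
      linarith
    · have hax : x < -a := by linarith
      have hxa2 : ¬ a < x := by linarith
      rw [hFdef]; simp only [extScaling, if_neg hxa, if_neg hxa2]
      apply hφ0
      have hx' : x < -B := by linarith
      have h3 : σ * (x + a) < -(3*a) := by
        have hm := mul_lt_mul_of_pos_left
          (show x + a < -(3*a/σ) by rw [hBdef] at hx'; linarith) hσ0
        rw [mul_neg, hcan3] at hm
        linarith
      rw [abs_of_neg (by linarith)]
      linarith
  -- derivative of F
  have hDzero : ∀ x : ℝ, |x| < a + a/σ → D x = 0 := by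
    intro x hx
    have hev : F =ᶠ[nhds x] fun _ => (1:ℝ) := by
      filter_upwards [Ioo_mem_nhds (show -(a + a/σ) < x from neg_lt_of_abs_lt hx)
        (lt_of_le_of_lt (le_abs_self x) hx)] with y hy
      exact hFone' y (abs_lt.mpr ⟨hy.1, hy.2⟩)
    rw [hDdef, hev.deriv_eq]; exact deriv_const x 1
  have hDpos : ∀ x : ℝ, a < x → D x = σ * deriv (⇑φ) (a + σ*(x-a)) := by
    intro x hx
    have hev : F =ᶠ[nhds x] fun y => φ (a + σ*(y-a)) := by
      filter_upwards [Ioi_mem_nhds hx] with y hy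
      have hy' : a < y := hy
      have h1 : ¬ |y| ≤ a := by rw [abs_of_pos (by linarith)]; linarith
      rw [hFdef]; simp only [extScaling, if_neg h1, if_pos hy']
    have h1 : HasDerivAt (fun y : ℝ => a + σ*(y-a)) σ x := by
      simpa using (((hasDerivAt_id x).sub_const a).const_mul σ).const_add a
    have hda : HasDerivAt (fun y : ℝ => φ (a + σ*(y-a)))
        (deriv (⇑φ) (a + σ*(x-a)) * σ) x :=
      (hφdiff (a + σ*(x-a))).hasDerivAt.comp x h1
    rw [hDdef, hev.deriv_eq, hda.deriv]; ring
  have hDneg : ∀ x : ℝ, x < -a → D x = σ * deriv (⇑φ) (-a + σ*(x+a)) := by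
    intro x hx
    have hev : F =ᶠ[nhds x] fun y => φ (-a + σ*(y+a)) := by
      filter_upwards [Iio_mem_nhds hx] with y hy
      have hy' : y < -a := hy
      have h1 : ¬ |y| ≤ a := by rw [abs_of_neg (by linarith)]; linarith
      have h2 : ¬ a < y := by linarith
      rw [hFdef]; simp only [extScaling, if_neg h1, if_neg h2]
    have h1 : HasDerivAt (fun y : ℝ => -a + σ*(y+a)) σ x := by
      simpa using (((hasDerivAt_id x).add_const a).const_mul σ).const_add (-a)
    have hda : HasDerivAt (fun y : ℝ => φ (-a + σ*(y+a)))
        (deriv (⇑φ) (-a + σ*(x+a)) * σ) x :=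
      (hφdiff (-a + σ*(x+a))).hasDerivAt.comp x h1
    rw [hDdef, hev.deriv_eq, hda.deriv]; ring
  -- pointwise bound on D²
  have hDsq : ∀ x : ℝ, D x ^ 2 ≤
      Set.indicator (Set.Icc (-B) B) (fun _ => (σ*M)^2) x := by
    intro x
    rcases le_or_gt |x| a with h | h
    · have hD : D x = 0 := hDzero x (by linarith)
      have hxB : x ∈ Set.Icc (-B) B := by
        rw [Set.mem_Icc]
        constructor <;> [linarith [neg_abs_le x]; linarith [le_abs_self x]]
      rw [hD, Set.indicator_of_mem hxB]
      simpa using sq_nonneg (σ*M)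
    · rcases lt_abs.mp h with h2 | h2
      · rcases le_or_gt x B with h3 | h3
        · have hD := hDpos x h2
          have hxB : x ∈ Set.Icc (-B) B := Set.mem_Icc.mpr ⟨by linarith, h3⟩
          rw [hD, Set.indicator_of_mem hxB]
          have habs : |σ * deriv (⇑φ) (a + σ*(x-a))| ≤ σ*M := by
            rw [abs_mul, abs_of_pos hσ0]
            exact mul_le_mul_of_nonneg_left (hM _) hσ0.le
          obtain ⟨hl, hr⟩ := abs_le.mp habs
          exact sq_le_sq' hl hr
        · have harg : 3*a < |a + σ*(x-a)| := by
            have h4 : 3*a < σ * (x - a) := by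
              have hm := mul_lt_mul_of_pos_left
                (show 3*a/σ < x - a by rw [hBdef] at h3; linarith) hσ0
              rwa [hcan3] at hm
            rw [abs_of_pos (by linarith)]
            linarith
          have hD : D x = 0 := by rw [hDpos x h2, hφ'0 _ harg, mul_zero]
          have hxB : x ∉ Set.Icc (-B) B := by
            rw [Set.mem_Icc]; push_neg; intro _; linarith
          rw [hD, Set.indicator_of_notMem hxB]
          norm_num
      · have hx2 : x < -a := by linarith
        rcases le_or_gt (-B) x with h3 | h3
        · have hD := hDneg x hx2
          have hxB : x ∈ Set.Icc (-B) B := Set.mem_Icc.mpr ⟨h3, by linarith⟩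
          rw [hD, Set.indicator_of_mem hxB]
          have habs : |σ * deriv (⇑φ) (-a + σ*(x+a))| ≤ σ*M := by
            rw [abs_mul, abs_of_pos hσ0]
            exact mul_le_mul_of_nonneg_left (hM _) hσ0.le
          obtain ⟨hl, hr⟩ := abs_le.mp habs
          exact sq_le_sq' hl hr
        · have harg : 3*a < |(-a) + σ*(x+a)| := by
            have h4 : σ * (x + a) < -(3*a) := by
              have hm := mul_lt_mul_of_pos_left
                (show x + a < -(3*a/σ) by rw [hBdef] at h3; linarith) hσ0
              rw [mul_neg, hcan3] at hm
              linarith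
            rw [abs_of_neg (by linarith)]
            linarith
          have hD : D x = 0 := by rw [hDneg x hx2, hφ'0 _ harg, mul_zero]
          have hxB : x ∉ Set.Icc (-B) B := by
            rw [Set.mem_Icc]; push_neg; intro h5; linarith
          rw [hD, Set.indicator_of_notMem hxB]
          norm_num
  -- integrability of D²
  have hDmeas : Measurable D := by rw [hDdef]; exact measurable_deriv F
  have hind : Integrable (Set.indicator (Set.Icc (-B) B) (fun _ : ℝ => (σ*M)^2)) := by
    rw [integrable_indicator_iff measurableSet_Icc]
    exact integrableOn_const measure_Icc_lt_top.ne
  have hD2int : Integrable (fun x => D x ^ 2) := by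
    refine hind.mono' ((hDmeas.pow_const 2).aestronglyMeasurable) ?_
    filter_upwards with x
    rw [Real.norm_eq_abs, abs_of_nonneg (sq_nonneg _)]
    exact hDsq x
  have hD2 : (∫ x : ℝ, D x ^ 2) ≤ σ * K := by
    have h1 : (∫ x : ℝ, D x ^ 2)
        ≤ ∫ x : ℝ, Set.indicator (Set.Icc (-B) B) (fun _ => (σ*M)^2) x :=
      integral_mono hD2int hind hDsq
    have h2 : (∫ x : ℝ, Set.indicator (Set.Icc (-B) B) (fun _ => (σ*M)^2) x)
        = (2*B) * (σ*M)^2 := by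
      rw [integral_indicator_const _ measurableSet_Icc]
      rw [Real.volume_real_Icc]
      rw [max_eq_left (by linarith)]
      rw [smul_eq_mul]
      ring_nf
    have hσ2 : σ^2 ≤ σ := by nlinarith
    have e4 : (2*B) * (σ*M)^2 = 2*(a*σ^2*M^2) + 6*(a*σ*M^2) := by
      rw [hBdef]
      field_simp
      ring
    have h5 : a*σ^2*M^2 ≤ a*σ*M^2 :=
      mul_le_mul_of_nonneg_right (mul_le_mul_of_nonneg_left hσ2 ha0.le) (sq_nonneg M)
    have h6 : σ * K = 8*(a*σ*M^2) := by rw [hKdef]; ring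
    linarith [mul_nonneg (mul_nonneg ha0.le hσ0.le) (sq_nonneg M)]
  -- continuity and integrability of F
  have hFcont : Continuous F := by
    rw [continuous_iff_continuousAt]
    intro x
    rcases lt_or_ge |x| (a + a/σ) with h | h
    · have hev : F =ᶠ[nhds x] fun _ => (1:ℝ) := by
        filter_upwards [Ioo_mem_nhds (show -(a + a/σ) < x from neg_lt_of_abs_lt h)
          (lt_of_le_of_lt (le_abs_self x) h)] with y hy
        exact hFone' y (abs_lt.mpr ⟨hy.1, hy.2⟩)
      exact continuousAt_const.congr hev.symm
    · have h' : a < |x| := by linarith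
      rcases lt_abs.mp h' with h2 | h2
      · have hev : F =ᶠ[nhds x] fun y => φ (a + σ*(y-a)) := by
          filter_upwards [Ioi_mem_nhds h2] with y hy
          have hy' : a < y := hy
          have h1 : ¬ |y| ≤ a := by rw [abs_of_pos (by linarith)]; linarith
          rw [hFdef]; simp only [extScaling, if_neg h1, if_pos hy']
        have hc : Continuous fun y : ℝ => a + σ*(y-a) :=
          continuous_const.add (continuous_const.mul (continuous_id.sub continuous_const))
        exact (φ.continuous.comp hc).continuousAt.congr hev.symm
      · have hx2 : x < -a := by linarith
        have hev : F =ᶠ[nhds x] fun y => φ (-a + σ*(y+a)) := by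
          filter_upwards [Iio_mem_nhds hx2] with y hy
          have hy' : y < -a := hy
          have h1 : ¬ |y| ≤ a := by rw [abs_of_neg (by linarith)]; linarith
          have h2' : ¬ a < y := by linarith
          rw [hFdef]; simp only [extScaling, if_neg h1, if_neg h2']
        have hc : Continuous fun y : ℝ => -a + σ*(y+a) :=
          continuous_const.add (continuous_const.mul (continuous_id.add continuous_const))
        exact (φ.continuous.comp hc).continuousAt.congr hev.symm
  have hFcs2 : HasCompactSupport fun x => F x ^ 2 := by
    apply HasCompactSupport.intro (isCompact_Icc (a := -B) (b := B))
    intro x hx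
    have : B < |x| := by
      rw [Set.mem_Icc, not_and_or, not_le, not_le] at hx
      rcases hx with h | h
      · rw [abs_of_neg (by linarith)]; linarith
      · rw [abs_of_pos (by linarith)]; exact h
    rw [hFzero x this]; ring
  have hF2int : Integrable (fun x => F x ^ 2) :=
    (hFcont.pow 2).integrable_of_hasCompactSupport hFcs2
  -- integrability of the coupling terms
  have hαF2int : Integrable (fun x => (α x - α₀) * F x ^ 2) := by
    refine habs.mono' (((hαm.sub measurable_const).mul
      ((hFcont.measurable).pow_const 2)).aestronglyMeasurable) ?_
    filter_upwards with x
    obtain ⟨h0, h1⟩ := hFmem x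
    have hF2le : F x ^ 2 ≤ 1 := by nlinarith
    rw [Real.norm_eq_abs, abs_mul, abs_of_nonneg (sq_nonneg (F x))]
    calc |α x - α₀| * F x ^ 2 ≤ |α x - α₀| * 1 :=
          mul_le_mul_of_nonneg_left hF2le (abs_nonneg _)
      _ = |α x - α₀| := mul_one _
  have hα₀F2int : Integrable (fun x => α₀ * F x ^ 2) := hF2int.const_mul α₀
  -- the key estimate on ∫ (α - α₀) F²
  have hQlt : (∫ x : ℝ, (α x - α₀) * F x ^ 2) < I / 2 := by
    have hsplit := integral_add_compl (measurableSet_Icc (a := -a) (b := a)) hαF2int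
    have h1 : (∫ x in Set.Icc (-a) a, (α x - α₀) * F x ^ 2)
        = ∫ x in Set.Icc (-a) a, (α x - α₀) := by
      apply setIntegral_congr_fun measurableSet_Icc
      intro x hx
      rw [Set.mem_Icc] at hx
      have hFx := hF1 x (abs_le.mpr ⟨hx.1, hx.2⟩)
      simp only [hFx]
      ring
    have h2 : (∫ x in (Set.Icc (-a) a)ᶜ, (α x - α₀) * F x ^ 2)
        ≤ ∫ x in (Set.Icc (-a) a)ᶜ, |α x - α₀| := by
      apply setIntegral_mono_on hαF2int.integrableOn habs.integrableOn
        measurableSet_Icc.compl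
      intro x _
      obtain ⟨h0, h1'⟩ := hFmem x
      have hF2le : F x ^ 2 ≤ 1 := by nlinarith
      calc (α x - α₀) * F x ^ 2 ≤ |α x - α₀| * F x ^ 2 :=
            mul_le_mul_of_nonneg_right (le_abs_self _) (sq_nonneg _)
        _ ≤ |α x - α₀| * 1 := mul_le_mul_of_nonneg_left hF2le (abs_nonneg _)
        _ = |α x - α₀| := mul_one _
    linarith
  -- assemble the final inequality
  simp_rw [mul_pow, intervalIntegral.integral_const_mul, hnorm, mul_one]
  have e2 : (∫ x : ℝ, (F x ^ 2 * ∫ y in (-d₂)..(0:ℝ), χ'₁ y ^ 2)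
        + F x ^ 2 * ∫ y in (0:ℝ)..d₁, χ'₂ y ^ 2)
      = (∫ x : ℝ, F x ^ 2) * (ν - α₀ * χ 0 ^ 2) := by
    simp_rw [← mul_add]
    rw [MeasureTheory.integral_mul_const, hJ]
  have e3 : (∫ x : ℝ, α x * (F x ^ 2 * χ 0 ^ 2))
      = ((∫ x : ℝ, (α x - α₀) * F x ^ 2) + α₀ * ∫ x : ℝ, F x ^ 2) * χ 0 ^ 2 := by
    have heq : (fun x => α x * (F x ^ 2 * χ 0 ^ 2))
        = fun x => ((α x - α₀) * F x ^ 2) * χ 0 ^ 2 + (α₀ * F x ^ 2) * χ 0 ^ 2 := by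
      funext x; ring
    rw [heq, integral_add (hαF2int.mul_const _) (hα₀F2int.mul_const _),
      MeasureTheory.integral_mul_const, MeasureTheory.integral_mul_const,
      MeasureTheory.integral_const_mul]
    ring
  rw [e2, e3]
  have hfinal : (∫ x : ℝ, D x ^ 2) + (∫ x : ℝ, (α x - α₀) * F x ^ 2) * χ 0 ^ 2 < 0 := by
    have h1 : (∫ x : ℝ, (α x - α₀) * F x ^ 2) * χ 0 ^ 2 < (I/2) * χ 0 ^ 2 :=
      mul_lt_mul_of_pos_right hQlt hχ0sq
    have h2 : (I/2) * χ 0 ^ 2 = -P := by rw [hPdef]; ring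
    have h3 : σ * K < P := by linarith
    linarith
  linarith [hfinal]
end

section
/- Let R > 0, A ∈ ℝ, α ∈ ℝ, and let ℓ > 0 satisfy sin(2πRℓ) ≠ 0 and e^{2πiRA} ≠ e^{−2πiRℓ}. Set c := (e^{2πiRA} − e^{2πiRℓ})/(e^{2πiRA} − e^{−2πiRℓ}) and χ(v) := e^{−iAv}·(e^{iℓv} − c·e^{−iℓv}) for v ∈ [0, 2πR]. Then: (a) (−i·d/dv + A)²χ = ℓ²·χ on (0, 2πR); (b) χ(0) = χ(2πR); (c) χ(0) = 2i·sin(2πRℓ)/(e^{2πiRA} − e^{−2πiRℓ}), which is nonzero; (d) the condition χ′(0) − χ′(2πR) = α·χ(0) holds if and only if −α = 2ℓ·(cot(2πRℓ) − cos(2πRA)/sin(2πRℓ)). -/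
open Real Complex

private lemma cexp_deriv (d : ℂ) (x : ℝ) :
    HasDerivAt (fun v : ℝ => Complex.exp (d * v)) (d * Complex.exp (d * x)) x := by
  have h := (((hasDerivAt_id (x:ℂ)).const_mul d).cexp).comp_ofReal
  simpa [mul_comm] using h


set_option maxHeartbeats 1000000 in
/-- Properties of the transverse eigenfunction on the Aharonov–Bohm cylinder:
`χ(v) = e^{−iAv}(e^{iℓv} − c e^{−iℓv})` satisfies the eigenvalue equation
`(−i d/dv + A)²χ = ℓ²χ`, the periodicity `χ(0) = χ(2πR)`, has the explicit
nonzero value at `0`, and the δ-coupling condition holds iff the cylinder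
spectral condition does. -/
theorem cylinder_transverse_eigenfunction
    (R A α ℓ : ℝ) (hR : 0 < R) (hℓ : 0 < ℓ)
    (hsin : Real.sin (2 * π * R * ℓ) ≠ 0)
    (hexp : Complex.exp ((2 * π * R * A : ℝ) * Complex.I)
        ≠ Complex.exp (-((2 * π * R * ℓ : ℝ) * Complex.I)))
    (c : ℂ)
    (hc : c = (Complex.exp ((2 * π * R * A : ℝ) * Complex.I)
          - Complex.exp ((2 * π * R * ℓ : ℝ) * Complex.I))
        / (Complex.exp ((2 * π * R * A : ℝ) * Complex.I)
          - Complex.exp (-((2 * π * R * ℓ : ℝ) * Complex.I))))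
    (χ : ℝ → ℂ)
    (hχ : χ = fun v : ℝ => Complex.exp (-(Complex.I * (A : ℂ) * (v : ℂ))) *
      (Complex.exp (Complex.I * (ℓ : ℂ) * (v : ℂ))
        - c * Complex.exp (-(Complex.I * (ℓ : ℂ) * (v : ℂ))))) :
    ∃ χ' χ'' : ℝ → ℂ,
      (∀ v : ℝ, HasDerivAt χ (χ' v) v) ∧
      (∀ v : ℝ, HasDerivAt χ' (χ'' v) v) ∧
      (∀ v ∈ Set.Ioo (0 : ℝ) (2 * π * R),
        -χ'' v - 2 * Complex.I * (A : ℂ) * χ' v + (A : ℂ) ^ 2 * χ v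
          = (ℓ : ℂ) ^ 2 * χ v) ∧
      χ 0 = χ (2 * π * R) ∧
      (χ 0 = 2 * Complex.I * (Real.sin (2 * π * R * ℓ) : ℂ)
          / (Complex.exp ((2 * π * R * A : ℝ) * Complex.I)
            - Complex.exp (-((2 * π * R * ℓ : ℝ) * Complex.I))) ∧
        χ 0 ≠ 0) ∧
      (χ' 0 - χ' (2 * π * R) = (α : ℂ) * χ 0 ↔
        -α = 2 * ℓ * (Real.cot (2 * π * R * ℓ)
          - Real.cos (2 * π * R * A) / Real.sin (2 * π * R * ℓ))) := by
  rw [Complex.exp_neg ((2 * π * R * ℓ : ℝ) * Complex.I)] at hexp hc ⊢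
  set a := Complex.exp ((2 * π * R * A : ℝ) * Complex.I) with haDef
  set b := Complex.exp ((2 * π * R * ℓ : ℝ) * Complex.I) with hbDef
  have ha0 : a ≠ 0 := by rw [haDef]; exact Complex.exp_ne_zero _
  have hb0 : b ≠ 0 := by rw [hbDef]; exact Complex.exp_ne_zero _
  have hab : a - b⁻¹ ≠ 0 := sub_ne_zero.mpr hexp
  have hbinv : b * b⁻¹ = 1 := mul_inv_cancel₀ hb0
  have hcmul : c * (a - b⁻¹) = a - b := by rw [hc, div_mul_cancel₀ _ hab]
  have hcb : c * (a * b - 1) = (a - b) * b := by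
    linear_combination b * hcmul + c * hbinv
  have hsinC : ((Real.sin (2 * π * R * ℓ) : ℝ) : ℂ) = (b⁻¹ - b) * Complex.I / 2 := by
    rw [Complex.ofReal_sin]
    have h := Complex.two_sin (((2 * π * R * ℓ : ℝ) : ℂ))
    rw [neg_mul, Complex.exp_neg] at h
    linear_combination h / 2
  have hcosT : ((Real.cos (2 * π * R * ℓ) : ℝ) : ℂ) = (b + b⁻¹) / 2 := by
    rw [Complex.ofReal_cos]
    have h := Complex.two_cos (((2 * π * R * ℓ : ℝ) : ℂ))
    rw [neg_mul, Complex.exp_neg] at h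
    linear_combination h / 2
  have hcosA : ((Real.cos (2 * π * R * A) : ℝ) : ℂ) = (a + a⁻¹) / 2 := by
    rw [Complex.ofReal_cos]
    have h := Complex.two_cos (((2 * π * R * A : ℝ) : ℂ))
    rw [neg_mul, Complex.exp_neg] at h
    linear_combination h / 2
  have hsinne : ((Real.sin (2 * π * R * ℓ) : ℝ) : ℂ) ≠ 0 := Complex.ofReal_ne_zero.mpr hsin
  have hbb : b⁻¹ - b ≠ 0 := by
    intro h
    exact hsinne (by rw [hsinC, h, zero_mul, zero_div])
  have hbb2 : b - b⁻¹ ≠ 0 := fun h => hbb (by linear_combination -h)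
  have hχe : χ = fun v : ℝ => Complex.exp (-(Complex.I * (A : ℂ)) * v) *
      (Complex.exp ((Complex.I * (ℓ : ℂ)) * v)
        - c * Complex.exp (-(Complex.I * (ℓ : ℂ)) * v)) := by
    rw [hχ]; simp only [neg_mul]
  set u : ℂ := -(Complex.I * (A : ℂ)) with huDef
  set p : ℂ := Complex.I * (ℓ : ℂ) with hpDef
  -- values of the exponentials at the endpoints
  have hTu : Complex.exp (u * ((2 * π * R : ℝ) : ℂ)) = a⁻¹ := by
    rw [huDef, haDef, ← Complex.exp_neg]; congr 1; push_cast; ring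
  have hTp : Complex.exp (p * ((2 * π * R : ℝ) : ℂ)) = b := by
    rw [hpDef, hbDef]; congr 1; push_cast; ring
  have hTq : Complex.exp (-p * ((2 * π * R : ℝ) : ℂ)) = b⁻¹ := by
    rw [hpDef, hbDef, ← Complex.exp_neg]; congr 1; push_cast; ring
  refine ⟨fun v : ℝ => (u * Complex.exp (u * v)) *
        (Complex.exp (p * v) - c * Complex.exp (-p * v))
      + Complex.exp (u * v) *
        (p * Complex.exp (p * v) - c * (-p * Complex.exp (-p * v))),
    fun v : ℝ => ((u * (u * Complex.exp (u * v))) *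
        (Complex.exp (p * v) - c * Complex.exp (-p * v))
      + (u * Complex.exp (u * v)) *
        (p * Complex.exp (p * v) - c * (-p * Complex.exp (-p * v))))
      + ((u * Complex.exp (u * v)) *
        (p * Complex.exp (p * v) - c * (-p * Complex.exp (-p * v)))
      + Complex.exp (u * v) *
        (p * (p * Complex.exp (p * v)) - c * (-p * (-p * Complex.exp (-p * v))))),
    ?_, ?_, ?_, ?_, ?_, ?_⟩
  · intro v
    rw [hχe]
    exact (cexp_deriv u v).mul
      ((cexp_deriv p v).sub ((cexp_deriv (-p) v).const_mul c))
  · intro v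
    exact (((cexp_deriv u v).const_mul u).mul
        ((cexp_deriv p v).sub ((cexp_deriv (-p) v).const_mul c))).add
      ((cexp_deriv u v).mul
        (((cexp_deriv p v).const_mul p).sub
          (((cexp_deriv (-p) v).const_mul (-p)).const_mul c)))
  · intro v _
    simp only [hχe, huDef, hpDef]
    linear_combination (((A : ℂ) ^ 2 - (ℓ : ℂ) ^ 2) *
      (Complex.exp (-(Complex.I * (A : ℂ)) * (v : ℂ)) *
        (Complex.exp ((Complex.I * (ℓ : ℂ)) * (v : ℂ))
          - c * Complex.exp (-(Complex.I * (ℓ : ℂ)) * (v : ℂ))))) * Complex.I_sq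
  · -- periodicity
    simp only [hχe, Complex.ofReal_zero, mul_zero, Complex.exp_zero, mul_one, one_mul,
      hTu, hTp, hTq]
    field_simp
    linear_combination -hcb
  · constructor
    · simp only [hχe, Complex.ofReal_zero, mul_zero, Complex.exp_zero, mul_one, one_mul]
      rw [hsinC, eq_div_iff hab]
      linear_combination (-1) * hcmul + (b - b⁻¹) * Complex.I_sq
    · have hv : (1:ℂ) - c = (b - b⁻¹) / (a - b⁻¹) := by
        rw [eq_div_iff hab]; linear_combination -hcmul
      simp only [hχe, Complex.ofReal_zero, mul_zero, Complex.exp_zero, mul_one, one_mul]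
      rw [hv]
      exact div_ne_zero hbb2 hab
  · simp only [Complex.ofReal_zero, mul_zero, Complex.exp_zero, mul_one, one_mul,
      hTu, hTp, hTq, hχe]
    have h1c0 : (1:ℂ) - c = (b - b⁻¹) / (a - b⁻¹) := by
      rw [eq_div_iff hab]; linear_combination -hcmul
    have h1pc : (1:ℂ) + c = (2 * a - b - b⁻¹) / (a - b⁻¹) := by
      rw [eq_div_iff hab]; linear_combination hcmul
    have hbc1 : b - c * b⁻¹ = a * (b - b⁻¹) / (a - b⁻¹) := by
      rw [eq_div_iff hab]; linear_combination (-b⁻¹) * hcmul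
    have h2 : b + c * b⁻¹ = (a * (b + b⁻¹) - 2) / (a - b⁻¹) := by
      rw [eq_div_iff hab]; linear_combination b⁻¹ * hcmul + (-2) * hbinv
    have hpb : p * b - c * (-p * b⁻¹) = p * ((a * (b + b⁻¹) - 2) / (a - b⁻¹)) := by
      linear_combination p * h2
    have step1 : u * (1 - c) + (p - c * -p)
        - (u * a⁻¹ * (b - c * b⁻¹) + a⁻¹ * (p * b - c * (-p * b⁻¹)))
        = 2 * p * (a + a⁻¹ - b - b⁻¹) / (a - b⁻¹) := by
      have haa : a * a⁻¹ = 1 := mul_inv_cancel₀ ha0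
      have hDD : (a - b⁻¹) * (a - b⁻¹)⁻¹ = 1 := mul_inv_cancel₀ hab
      rw [show p - c * -p = p * (1 + c) from by ring, h1c0, h1pc, hbc1, hpb,
        eq_div_iff hab]
      linear_combination
        (u * (b - b⁻¹) + p * (2 * a - b - b⁻¹) - u * a⁻¹ * (a * (b - b⁻¹))
          - a⁻¹ * p * (a * (b + b⁻¹) - 2)) * hDD
        + (-(u * (b - b⁻¹) + p * (b + b⁻¹))) * haa
    have h1c : (1:ℂ) - c = (b - b⁻¹) / (a - b⁻¹) := by
      rw [eq_div_iff hab]; linear_combination -hcmul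
    have h1cne : (1:ℂ) - c ≠ 0 := by
      rw [h1c]; exact div_ne_zero hbb2 hab
    have hdne : (b⁻¹ - b) * Complex.I / 2 ≠ 0 :=
      div_ne_zero (mul_ne_zero hbb Complex.I_ne_zero) two_ne_zero
    have hKval : ((2 * ℓ * (Real.cos (2 * π * R * A) - Real.cos (2 * π * R * ℓ))
          / Real.sin (2 * π * R * ℓ) : ℝ) : ℂ)
        = 2 * p * (a + a⁻¹ - b - b⁻¹) / (b - b⁻¹) := by
      rw [show ((2 * ℓ * (Real.cos (2 * π * R * A) - Real.cos (2 * π * R * ℓ))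
            / Real.sin (2 * π * R * ℓ) : ℝ) : ℂ)
          = 2 * (ℓ:ℂ) * (((Real.cos (2 * π * R * A) : ℝ):ℂ)
            - ((Real.cos (2 * π * R * ℓ) : ℝ):ℂ)) / ((Real.sin (2 * π * R * ℓ) : ℝ):ℂ)
          from by push_cast; ring]
      rw [hcosA, hcosT, hsinC, hpDef, div_eq_div_iff hdne hbb2]
      linear_combination ((ℓ:ℂ) * (a + a⁻¹ - b - b⁻¹) * (b - b⁻¹)) * Complex.I_sq
    have step2 : ((2 * ℓ * (Real.cos (2 * π * R * A) - Real.cos (2 * π * R * ℓ))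
          / Real.sin (2 * π * R * ℓ) : ℝ) : ℂ) * (1 - c)
        = 2 * p * (a + a⁻¹ - b - b⁻¹) / (a - b⁻¹) := by
      rw [hKval, h1c]
      rw [div_mul_div_comm, div_eq_div_iff (mul_ne_zero hbb2 hab) hab]
      ring
    rw [step1.trans step2.symm, mul_left_inj' h1cne, Complex.ofReal_inj,
      Real.cot_eq_cos_div_sin, div_sub_div_same,
      show 2 * ℓ * ((Real.cos (2 * π * R * ℓ) - Real.cos (2 * π * R * A))
          / Real.sin (2 * π * R * ℓ))
        = -(2 * ℓ * (Real.cos (2 * π * R * A) - Real.cos (2 * π * R * ℓ))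
          / Real.sin (2 * π * R * ℓ)) from by ring, neg_inj]
    exact eq_comm
end

section
/- Let R > 0 and A ∈ ℝ with 2RA ∉ ℤ. Then: (a) for every integer n ≥ 2 and every α ∈ ℝ there exists ℓ ∈ ((n−1)/(2R), n/(2R)) with sin(2πRℓ) ≠ 0 and −α = 2ℓ·(cot(2πRℓ) − cos(2πRA)/sin(2πRℓ)); (b) if moreover α > −2·sin²(πRA)/(πR), then such an ℓ exists also in the interval (0, 1/(2R)). -/
open Real

noncomputable def Fc (R c : ℝ) (x : ℝ) : ℝ :=
  2 * x * (Real.cos (2 * π * R * x) - c) * (Real.sin (2 * π * R * x))⁻¹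

lemma ivt_key {a b y : ℝ} {f : ℝ → ℝ} (hab : a < b)
    (hcont : ContinuousOn f (Set.Ioo a b))
    (h1 : ∀ᶠ x in nhdsWithin a (Set.Ioi a), y < f x)
    (h2 : ∀ᶠ x in nhdsWithin b (Set.Iio b), f x < y) :
    ∃ x ∈ Set.Ioo a b, f x = y := by
  have hb : Set.Ioo a b ∈ nhdsWithin b (Set.Iio b) :=
    Ioo_mem_nhdsLT_of_mem ⟨hab, le_refl b⟩
  obtain ⟨x₂, hx₂y, hx₂⟩ := (h2.and hb).exists
  have ha : Set.Ioo a x₂ ∈ nhdsWithin a (Set.Ioi a) :=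
    Ioo_mem_nhdsGT_of_mem ⟨le_refl a, hx₂.1⟩
  obtain ⟨x₁, hx₁y, hx₁⟩ := (h1.and ha).exists
  have hsub : Set.Icc x₁ x₂ ⊆ Set.Ioo a b := fun z hz =>
    ⟨lt_of_lt_of_le hx₁.1 hz.1, lt_of_le_of_lt hz.2 hx₂.2⟩
  have hy : y ∈ Set.Icc (f x₂) (f x₁) := ⟨le_of_lt hx₂y, le_of_lt hx₁y⟩
  obtain ⟨x, hx, hfx⟩ := intermediate_value_Icc' (le_of_lt hx₁.2) (hcont.mono hsub) hy
  exact ⟨x, hsub hx, hfx⟩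

lemma cos_m (n : ℕ) : Real.cos ((n:ℝ) * π) = (-1:ℝ) ^ n := by
  simpa using Real.cos_nat_mul_pi_sub 0 n

lemma sin_sign {R : ℝ} (hR : 0 < R) (m : ℕ) {x : ℝ}
    (hx : x ∈ Set.Ioo ((m : ℝ) / (2 * R)) (((m : ℝ) + 1) / (2 * R))) :
    0 < (-1 : ℝ) ^ m * Real.sin (2 * π * R * x) := by
  have h2R : (0:ℝ) < 2 * R := by linarith
  have hθ1 : (m : ℝ) * π < 2 * π * R * x := by
    have := hx.1
    rw [div_lt_iff₀ h2R] at this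
    nlinarith [pi_pos]
  have hθ2 : 2 * π * R * x < ((m : ℝ) + 1) * π := by
    have := hx.2
    rw [lt_div_iff₀ h2R] at this
    nlinarith [pi_pos]
  have key : Real.sin (2 * π * R * x) = (-1 : ℝ) ^ m * Real.sin (2 * π * R * x - m * π) := by
    have h := Real.sin_add_nat_mul_pi (2 * π * R * x - ↑m * π) m
    rw [show (2 * π * R * x - ↑m * π + ↑m * π) = 2 * π * R * x by ring] at h
    exact h
  rw [key]
  have hpos : 0 < Real.sin (2 * π * R * x - m * π) :=
    Real.sin_pos_of_pos_of_lt_pi (by linarith) (by nlinarith)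
  have hone : ((-1:ℝ)^m) * ((-1:ℝ)^m) = 1 := by
    rw [← pow_add, ← two_mul, pow_mul]; norm_num
  calc (0:ℝ) < Real.sin (2 * π * R * x - m * π) := hpos
  _ = ((-1:ℝ)^m * (-1:ℝ)^m) * Real.sin (2 * π * R * x - m * π) := by rw [hone, one_mul]
  _ = (-1:ℝ)^m * ((-1:ℝ)^m * Real.sin (2 * π * R * x - m * π)) := by ring

lemma sin_ne_zero_of_Ioo {R : ℝ} (hR : 0 < R) (m : ℕ) {x : ℝ}
    (hx : x ∈ Set.Ioo ((m : ℝ) / (2 * R)) (((m : ℝ) + 1) / (2 * R))) :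
    Real.sin (2 * π * R * x) ≠ 0 := by
  intro h
  have := sin_sign hR m hx
  rw [h, mul_zero] at this
  exact lt_irrefl 0 this

lemma Fc_continuousOn {R c : ℝ} (hR : 0 < R) (m : ℕ) :
    ContinuousOn (Fc R c) (Set.Ioo ((m : ℝ) / (2 * R)) (((m : ℝ) + 1) / (2 * R))) := by
  show ContinuousOn (fun x => 2 * x * (Real.cos (2 * π * R * x) - c)
    * (Real.sin (2 * π * R * x))⁻¹) _
  apply ContinuousOn.mul
  · exact (by fun_prop :
      Continuous fun x => 2 * x * (Real.cos (2 * π * R * x) - c)).continuousOn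
  · exact ContinuousOn.inv₀
      ((by fun_prop : Continuous fun x => Real.sin (2 * π * R * x)).continuousOn)
      (fun x hx => sin_ne_zero_of_Ioo hR m hx)

lemma tendsto_g {R : ℝ} (hR : 0 < R) (m : ℕ) {l : Filter ℝ} {a : ℝ}
    (hsin : Real.sin (2 * π * R * a) = 0) (hl : l ≤ nhds a)
    (hev : ∀ᶠ x in l, x ∈ Set.Ioo ((m : ℝ) / (2 * R)) (((m : ℝ) + 1) / (2 * R))) :
    Filter.Tendsto (fun x => (-1:ℝ)^m * Real.sin (2 * π * R * x)) l
      (nhdsWithin 0 (Set.Ioi 0)) := by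
  have hcontf : Continuous (fun x => (-1:ℝ)^m * Real.sin (2 * π * R * x)) := by fun_prop
  have hc' : Filter.Tendsto (fun x => (-1:ℝ)^m * Real.sin (2 * π * R * x)) (nhds a)
      (nhds ((-1:ℝ)^m * Real.sin (2 * π * R * a))) := hcontf.tendsto a
  rw [hsin, mul_zero] at hc'
  exact tendsto_nhdsWithin_of_tendsto_nhds_of_eventually_within _
    (hc'.mono_left hl) (hev.mono fun x hx => sin_sign hR m hx)

lemma Fc_congr {R c : ℝ} (m : ℕ) (x : ℝ) :
    ((-1:ℝ)^m * (2 * x * (Real.cos (2 * π * R * x) - c))) *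
      ((-1:ℝ)^m * Real.sin (2 * π * R * x))⁻¹ = Fc R c x := by
  have he : ((-1:ℝ)^m)⁻¹ = (-1:ℝ)^m := by rw [← inv_pow]; norm_num
  have hee : ((-1:ℝ)^m) * ((-1:ℝ)^m) = 1 := by
    rw [← pow_add, ← two_mul, pow_mul]; norm_num
  unfold Fc
  rw [mul_inv, he]
  set e := ((-1:ℝ)^m)
  linear_combination
    (2 * x * (Real.cos (2 * π * R * x) - c) * (Real.sin (2 * π * R * x))⁻¹) * hee

lemma tendsto_Fc_left {R c : ℝ} (hR : 0 < R) (hc : |c| < 1) (m : ℕ) (hm : 1 ≤ m) :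
    Filter.Tendsto (Fc R c) (nhdsWithin ((m:ℝ) / (2 * R)) (Set.Ioi ((m:ℝ) / (2 * R))))
      Filter.atTop := by
  have h2R : (0:ℝ) < 2 * R := by linarith
  set a := (m:ℝ) / (2 * R) with ha
  set b := ((m:ℝ) + 1) / (2 * R) with hb
  have hab : a < b := by
    rw [ha, hb, div_lt_div_iff₀ h2R h2R]; nlinarith
  have hIoo : Set.Ioo a b ∈ nhdsWithin a (Set.Ioi a) :=
    Ioo_mem_nhdsGT_of_mem ⟨le_refl a, hab⟩
  have hev : ∀ᶠ x in nhdsWithin a (Set.Ioi a), x ∈ Set.Ioo a b :=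
    Filter.eventually_of_mem hIoo fun x hx => hx
  have hsin : Real.sin (2 * π * R * a) = 0 := by
    rw [ha, show 2 * π * R * ((m:ℝ) / (2 * R)) = (m:ℝ) * π by field_simp]
    exact Real.sin_nat_mul_pi m
  have hg := tendsto_g hR m hsin nhdsWithin_le_nhds hev
  have hinv : Filter.Tendsto (fun x => ((-1:ℝ)^m * Real.sin (2 * π * R * x))⁻¹)
      (nhdsWithin a (Set.Ioi a)) Filter.atTop := tendsto_inv_nhdsGT_zero.comp hg
  set N : ℝ → ℝ := fun x => (-1:ℝ)^m * (2 * x * (Real.cos (2 * π * R * x) - c)) with hN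
  have hNcont : Continuous N := by fun_prop
  have hNa : N a = 2 * a * (1 - (-1:ℝ)^m * c) := by
    rw [hN]
    simp only
    rw [show 2 * π * R * a = (m:ℝ) * π by rw [ha]; field_simp, cos_m]
    have hee : ((-1:ℝ)^m) * ((-1:ℝ)^m) = 1 := by
      rw [← pow_add, ← two_mul, pow_mul]; norm_num
    linear_combination (2 * a) * hee
  have hapos : 0 < a := by
    rw [ha]; apply div_pos _ h2R; exact_mod_cast Nat.pos_of_ne_zero (by omega)
  have hecl : (-1:ℝ)^m * c < 1 := by
    calc (-1:ℝ)^m * c ≤ |(-1:ℝ)^m * c| := le_abs_self _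
    _ = |c| := by rw [abs_mul, abs_pow, abs_neg, abs_one, one_pow, one_mul]
    _ < 1 := hc
  have hNapos : 0 < N a := by rw [hNa]; nlinarith
  have hNt : Filter.Tendsto N (nhdsWithin a (Set.Ioi a)) (nhds (N a)) :=
    (hNcont.tendsto a).mono_left nhdsWithin_le_nhds
  have := Filter.Tendsto.pos_mul_atTop hNapos hNt hinv
  exact this.congr fun x => Fc_congr m x

lemma tendsto_Fc_right {R c : ℝ} (hR : 0 < R) (hc : |c| < 1) (m : ℕ) :
    Filter.Tendsto (Fc R c)
      (nhdsWithin (((m:ℝ)+1) / (2 * R)) (Set.Iio (((m:ℝ)+1) / (2 * R))))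
      Filter.atBot := by
  have h2R : (0:ℝ) < 2 * R := by linarith
  set a := (m:ℝ) / (2 * R) with ha
  set b := ((m:ℝ) + 1) / (2 * R) with hb
  have hab : a < b := by
    rw [ha, hb, div_lt_div_iff₀ h2R h2R]; nlinarith
  have hIoo : Set.Ioo a b ∈ nhdsWithin b (Set.Iio b) :=
    Ioo_mem_nhdsLT_of_mem ⟨hab, le_refl b⟩
  have hev : ∀ᶠ x in nhdsWithin b (Set.Iio b), x ∈ Set.Ioo a b :=
    Filter.eventually_of_mem hIoo fun x hx => hx
  have hsin : Real.sin (2 * π * R * b) = 0 := by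
    rw [hb, show 2 * π * R * (((m:ℝ) + 1) / (2 * R)) = ((m:ℝ) + 1) * π by field_simp]
    rw [show ((m:ℝ) + 1) = ((m + 1 : ℕ) : ℝ) by push_cast; ring]
    exact Real.sin_nat_mul_pi (m + 1)
  have hg := tendsto_g hR m hsin nhdsWithin_le_nhds hev
  have hinv : Filter.Tendsto (fun x => ((-1:ℝ)^m * Real.sin (2 * π * R * x))⁻¹)
      (nhdsWithin b (Set.Iio b)) Filter.atTop := tendsto_inv_nhdsGT_zero.comp hg
  set N : ℝ → ℝ := fun x => (-1:ℝ)^m * (2 * x * (Real.cos (2 * π * R * x) - c)) with hN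
  have hNcont : Continuous N := by fun_prop
  have hNb : N b = 2 * b * (-1 - (-1:ℝ)^m * c) := by
    rw [hN]
    simp only
    rw [show 2 * π * R * b = ((m:ℝ) + 1) * π by rw [hb]; field_simp]
    rw [show ((m:ℝ) + 1) = ((m + 1 : ℕ) : ℝ) by push_cast; ring, cos_m]
    have hee : ((-1:ℝ)^m) * ((-1:ℝ)^m) = 1 := by
      rw [← pow_add, ← two_mul, pow_mul]; norm_num
    rw [pow_succ]
    linear_combination (-(2 * b)) * hee
  have hbpos : 0 < b := by
    rw [hb]; apply div_pos _ h2R; positivity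
  have hecl : -1 < (-1:ℝ)^m * c := by
    have : |(-1:ℝ)^m * c| < 1 := by
      rw [abs_mul, abs_pow, abs_neg, abs_one, one_pow, one_mul]; exact hc
    linarith [abs_lt.mp this |>.1]
  have hNbneg : N b < 0 := by rw [hNb]; nlinarith
  have hNt : Filter.Tendsto N (nhdsWithin b (Set.Iio b)) (nhds (N b)) :=
    (hNcont.tendsto b).mono_left nhdsWithin_le_nhds
  have := Filter.Tendsto.neg_mul_atTop hNbneg hNt hinv
  exact this.congr fun x => Fc_congr m x

lemma tendsto_Fc_zero {R c : ℝ} (hR : 0 < R) :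
    Filter.Tendsto (Fc R c) (nhdsWithin 0 (Set.Ioi (0:ℝ)))
      (nhds ((1 - c) / (π * R))) := by
  have hπR : (π * R : ℝ) ≠ 0 := by positivity
  have hd : HasDerivAt Real.sin 1 0 := by simpa using Real.hasDerivAt_sin 0
  have h1 : Filter.Tendsto (fun x : ℝ => Real.sin x / x) (nhdsWithin 0 {(0:ℝ)}ᶜ) (nhds 1) := by
    have := hasDerivAt_iff_tendsto_slope.mp hd
    refine this.congr fun x => ?_
    simp [slope_def_field]
  have h2 : Filter.Tendsto (fun x : ℝ => x * (Real.sin x)⁻¹) (nhdsWithin 0 {(0:ℝ)}ᶜ)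
      (nhds 1) := by
    have := h1.inv₀ one_ne_zero
    rw [inv_one] at this
    refine this.congr fun x => ?_
    rw [div_eq_mul_inv, mul_inv, inv_inv, mul_comm]
  have h3 : Filter.Tendsto (fun x : ℝ => 2 * π * R * x) (nhdsWithin 0 (Set.Ioi (0:ℝ)))
      (nhdsWithin 0 {(0:ℝ)}ᶜ) := by
    apply tendsto_nhdsWithin_of_tendsto_nhds_of_eventually_within
    · have : Filter.Tendsto (fun x : ℝ => 2 * π * R * x) (nhds 0) (nhds (2 * π * R * 0)) :=
        (by fun_prop : Continuous fun x : ℝ => 2 * π * R * x).tendsto 0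
      rw [mul_zero] at this
      exact this.mono_left nhdsWithin_le_nhds
    · filter_upwards [self_mem_nhdsWithin] with x hx
      have hx0 : (0:ℝ) < x := hx
      have : (0:ℝ) < 2 * π * R * x := by positivity
      simp only [Set.mem_compl_iff, Set.mem_singleton_iff]
      linarith
  have h4 := h2.comp h3
  have h5 : Filter.Tendsto (fun x : ℝ => 2 * x * (Real.sin (2 * π * R * x))⁻¹)
      (nhdsWithin 0 (Set.Ioi (0:ℝ))) (nhds ((π * R)⁻¹)) := by
    have := h4.const_mul ((π * R)⁻¹)
    rw [mul_one] at this
    refine this.congr fun x => ?_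
    simp only [Function.comp]
    rw [show (π * R)⁻¹ * (2 * π * R * x * (Real.sin (2 * π * R * x))⁻¹)
        = ((π * R) * (π * R)⁻¹) * (2 * x * (Real.sin (2 * π * R * x))⁻¹) by ring,
      mul_inv_cancel₀ hπR, one_mul]
  have h6 : Filter.Tendsto (fun x : ℝ => Real.cos (2 * π * R * x) - c)
      (nhdsWithin 0 (Set.Ioi (0:ℝ))) (nhds (1 - c)) := by
    have : Filter.Tendsto (fun x : ℝ => Real.cos (2 * π * R * x) - c) (nhds 0)
        (nhds (Real.cos (2 * π * R * 0) - c)) :=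
      (by fun_prop : Continuous fun x : ℝ => Real.cos (2 * π * R * x) - c).tendsto 0
    rw [mul_zero, Real.cos_zero] at this
    exact this.mono_left nhdsWithin_le_nhds
  have h7 := h6.mul h5
  rw [div_eq_mul_inv]
  refine h7.congr fun x => ?_
  unfold Fc; ring

/-- existence of a solution of `Fc R c x = y` in the m-th interval, given eventual
lower bound near the left endpoint. -/
lemma exists_sol {R c : ℝ} (hR : 0 < R) (hc : |c| < 1) (m : ℕ) {y : ℝ}
    (hleft : ∀ᶠ x in nhdsWithin ((m:ℝ) / (2 * R)) (Set.Ioi ((m:ℝ) / (2 * R))), y < Fc R c x) :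
    ∃ x ∈ Set.Ioo ((m:ℝ) / (2 * R)) (((m:ℝ) + 1) / (2 * R)), Fc R c x = y := by
  have h2R : (0:ℝ) < 2 * R := by linarith
  have hab : (m:ℝ) / (2 * R) < ((m:ℝ) + 1) / (2 * R) := by
    rw [div_lt_div_iff₀ h2R h2R]; nlinarith
  exact ivt_key hab (Fc_continuousOn hR m) hleft
    ((tendsto_Fc_right hR hc m).eventually_lt_atBot y)

/-- Solvability of the cylinder spectral condition for non-integer flux
`2RA ∉ ℤ`: (a) in every interval `((n−1)/(2R), n/(2R))` with `n ≥ 2` for every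
`α`; (b) in `(0, 1/(2R))` provided `α > −2 sin²(πRA)/(πR)`. -/
theorem cylinder_spectral_condition_solvable
    (R A : ℝ) (hR : 0 < R) (hflux : ∀ k : ℤ, 2 * R * A ≠ (k : ℝ)) :
    (∀ n : ℕ, 2 ≤ n → ∀ α : ℝ,
      ∃ ℓ ∈ Set.Ioo (((n : ℝ) - 1) / (2 * R)) ((n : ℝ) / (2 * R)),
        Real.sin (2 * π * R * ℓ) ≠ 0 ∧
        -α = 2 * ℓ * (Real.cot (2 * π * R * ℓ)
          - Real.cos (2 * π * R * A) / Real.sin (2 * π * R * ℓ))) ∧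
    (∀ α : ℝ, -(2 * Real.sin (π * R * A) ^ 2 / (π * R)) < α →
      ∃ ℓ ∈ Set.Ioo (0 : ℝ) (1 / (2 * R)),
        Real.sin (2 * π * R * ℓ) ≠ 0 ∧
        -α = 2 * ℓ * (Real.cot (2 * π * R * ℓ)
          - Real.cos (2 * π * R * A) / Real.sin (2 * π * R * ℓ))) := by
  set c := Real.cos (2 * π * R * A) with hcdef
  have hsA : Real.sin (2 * π * R * A) ≠ 0 := by
    intro h
    obtain ⟨k, hk⟩ := Real.sin_eq_zero_iff.mp h
    apply hflux k
    have hπ : (π : ℝ) ≠ 0 := Real.pi_ne_zero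
    have : π * (2 * R * A) = π * (k : ℝ) := by nlinarith [hk]
    exact (mul_left_cancel₀ hπ this).symm ▸ rfl
  have hc : |c| < 1 := by
    have hid := Real.sin_sq_add_cos_sq (2 * π * R * A)
    have hs2 : 0 < Real.sin (2 * π * R * A) ^ 2 := by positivity
    rw [← sq_lt_one_iff_abs_lt_one]
    rw [hcdef]
    nlinarith
  -- final conversion from Fc-solutions to the stated form
  have convert_sol : ∀ (m : ℕ) (y : ℝ),
      (∃ x ∈ Set.Ioo ((m:ℝ) / (2 * R)) (((m:ℝ) + 1) / (2 * R)), Fc R c x = y) →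
      ∃ ℓ ∈ Set.Ioo ((m:ℝ) / (2 * R)) (((m:ℝ) + 1) / (2 * R)),
        Real.sin (2 * π * R * ℓ) ≠ 0 ∧
        y = 2 * ℓ * (Real.cot (2 * π * R * ℓ) - c / Real.sin (2 * π * R * ℓ)) := by
    intro m y ⟨x, hx, hFx⟩
    refine ⟨x, hx, sin_ne_zero_of_Ioo hR m hx, ?_⟩
    rw [Real.cot_eq_cos_div_sin, div_sub_div_same, div_eq_mul_inv, ← mul_assoc]
    exact hFx.symm
  constructor
  · intro n hn α
    set m : ℕ := n - 1 with hm
    have hn' : n = m + 1 := by omega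
    have hm1 : 1 ≤ m := by omega
    have hcast1 : ((n : ℝ) - 1) = (m : ℝ) := by rw [hn']; push_cast; ring
    have hcast2 : (n : ℝ) = (m : ℝ) + 1 := by rw [hn']; push_cast; ring
    rw [hcast1, hcast2]
    apply convert_sol m (-α)
    exact exists_sol hR hc m ((tendsto_Fc_left hR hc m hm1).eventually_gt_atTop (-α))
  · intro α hα
    have hcos2 : c = 1 - 2 * Real.sin (π * R * A) ^ 2 := by
      rw [hcdef, show 2 * π * R * A = 2 * (π * R * A) by ring, Real.cos_two_mul]
      nlinarith [Real.sin_sq_add_cos_sq (π * R * A)]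
    have hπR : (0:ℝ) < π * R := by positivity
    have hylt : -α < (1 - c) / (π * R) := by
      rw [hcos2, show (1 - (1 - 2 * Real.sin (π * R * A) ^ 2)) / (π * R)
        = 2 * Real.sin (π * R * A) ^ 2 / (π * R) by ring]
      linarith
    have h00 : ((0:ℕ):ℝ) / (2 * R) = 0 := by norm_num
    have hleft : ∀ᶠ x in nhdsWithin (((0:ℕ):ℝ) / (2 * R)) (Set.Ioi (((0:ℕ):ℝ) / (2 * R))),
        -α < Fc R c x := by
      rw [h00]
      exact (tendsto_Fc_zero hR).eventually_const_lt hylt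
    obtain ⟨ℓ, hℓ, hrest⟩ := convert_sol 0 (-α) (exists_sol hR hc 0 hleft)
    simp only [Nat.cast_zero, zero_div, zero_add] at hℓ
    exact ⟨ℓ, hℓ, hrest⟩
end

section
/- Let R > 0 and A ∈ ℝ with cos(2πRA) ≠ −1, and set α_m := −2·sin²(πRA)/(πR). For every α > α_m the cylinder spectral condition −α = 2ℓ·(cot(2πRℓ) − cos(2πRA)/sin(2πRℓ)) has a unique solution ℓ₁(α) ∈ (0, 1/(2R)), and the map α ↦ ν₁(α) := ℓ₁(α)² is strictly increasing and continuous on (α_m, ∞). -/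
open Real Filter Set Topology

noncomputable def Faux (c θ : ℝ) : ℝ := θ * (Real.cos θ - c) / Real.sin θ

lemma cos_mem_Ioo' {θ : ℝ} (hθ : θ ∈ Set.Ioo 0 π) : Real.cos θ ∈ Set.Ioo (-1 : ℝ) 1 := by
  have hs : 0 < Real.sin θ := Real.sin_pos_of_pos_of_lt_pi hθ.1 hθ.2
  have hsc := Real.sin_sq_add_cos_sq θ
  constructor <;> nlinarith

lemma aux_E_neg {c θ : ℝ} (hc1 : -1 < c) (hc2 : c ≤ 1) (hθ : θ ∈ Set.Ioo 0 π) :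
    Real.sin θ * Real.cos θ - θ + c * (θ * Real.cos θ - Real.sin θ) < 0 := by
  have hs : 0 < Real.sin θ := Real.sin_pos_of_pos_of_lt_pi hθ.1 hθ.2
  have hsl : Real.sin θ < θ := Real.sin_lt hθ.1
  have hco := cos_mem_Ioo' hθ
  have h1 : 0 ≤ (1 - c) * ((θ - Real.sin θ) * (1 + Real.cos θ)) := by
    apply mul_nonneg (by linarith) (mul_nonneg (by linarith) (by linarith [hco.1]))
  have h2 : 0 < (1 + c) * ((θ + Real.sin θ) * (1 - Real.cos θ)) := by
    apply mul_pos (by linarith) (mul_pos (by linarith) (by linarith [hco.2]))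
  nlinarith [h1, h2]

lemma Faux_hasDerivAt {c θ : ℝ} (hθ : θ ∈ Set.Ioo 0 π) :
    HasDerivAt (Faux c)
      ((Real.sin θ * Real.cos θ - θ + c * (θ * Real.cos θ - Real.sin θ)) / Real.sin θ ^ 2) θ := by
  have hs : Real.sin θ ≠ 0 := (Real.sin_pos_of_pos_of_lt_pi hθ.1 hθ.2).ne'
  have hN : HasDerivAt (fun θ => θ * (Real.cos θ - c)) ((Real.cos θ - c) + θ * (-Real.sin θ)) θ := by
    simpa using (hasDerivAt_id' θ).fun_mul ((Real.hasDerivAt_cos θ).sub_const c)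
  have := hN.fun_div (Real.hasDerivAt_sin θ) hs
  refine this.congr_deriv ?_
  rw [div_left_inj' (pow_ne_zero 2 hs)]
  linear_combination -θ * (Real.sin_sq_add_cos_sq θ)

lemma Faux_strictAntiOn {c : ℝ} (hc1 : -1 < c) (hc2 : c ≤ 1) :
    StrictAntiOn (Faux c) (Set.Ioo 0 π) := by
  apply strictAntiOn_of_deriv_neg (convex_Ioo 0 π)
  · intro x hx
    exact (Faux_hasDerivAt hx).continuousAt.continuousWithinAt
  · intro x hx
    rw [interior_Ioo] at hx
    rw [(Faux_hasDerivAt hx).deriv]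
    have hs : 0 < Real.sin x := Real.sin_pos_of_pos_of_lt_pi hx.1 hx.2
    exact div_neg_of_neg_of_pos (aux_E_neg hc1 hc2 hx) (by positivity)

lemma Faux_continuousOn {c : ℝ} : ContinuousOn (Faux c) (Set.Ioo 0 π) :=
  fun x hx => (Faux_hasDerivAt hx).continuousAt.continuousWithinAt

lemma tendsto_id_div_sin : Tendsto (fun θ : ℝ => θ / Real.sin θ) (𝓝[>] 0) (𝓝 1) := by
  have h : Tendsto (fun θ : ℝ => Real.sin θ / θ) (𝓝[≠] (0:ℝ)) (𝓝 1) := by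
    have := Real.hasDerivAt_sin 0
    rw [hasDerivAt_iff_tendsto_slope] at this
    refine (by simpa using this : Tendsto (slope Real.sin 0) (𝓝[≠] (0:ℝ)) (𝓝 1)).congr fun θ => ?_
    simp [slope_def_field, neg_div_neg_eq]
  have h2 := (h.mono_left (nhdsWithin_mono _ (fun x (hx : x ∈ Set.Ioi (0:ℝ)) => ne_of_gt hx))).inv₀ one_ne_zero
  simpa [inv_div] using h2

lemma Faux_tendsto_zero (c : ℝ) : Tendsto (Faux c) (𝓝[>] (0:ℝ)) (𝓝 (1 - c)) := by
  have h := tendsto_id_div_sin.mul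
    (((Real.continuous_cos.tendsto 0).mono_left nhdsWithin_le_nhds).sub
      (tendsto_const_nhds (x := c)))
  simp only [Real.cos_zero, one_mul] at h
  refine h.congr (fun θ => ?_)
  simp [Faux, mul_div_right_comm]

lemma Faux_tendsto_pi {c : ℝ} (hc1 : -1 < c) : Tendsto (Faux c) (𝓝[<] π) atBot := by
  have hsin : Tendsto Real.sin (𝓝[<] π) (𝓝[>] (0:ℝ)) := by
    apply tendsto_nhdsWithin_of_tendsto_nhds_of_eventually_within
    · simpa using (Real.continuous_sin.tendsto π).mono_left nhdsWithin_le_nhds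
    · filter_upwards [Ioo_mem_nhdsLT_of_mem (right_mem_Ioc.2 Real.pi_pos)] with θ hθ
      exact Real.sin_pos_of_pos_of_lt_pi hθ.1 hθ.2
  have hinv : Tendsto (fun θ => (Real.sin θ)⁻¹) (𝓝[<] π) atTop :=
    tendsto_inv_nhdsGT_zero.comp hsin
  have hnum : Tendsto (fun θ : ℝ => θ * (Real.cos θ - c)) (𝓝[<] π) (𝓝 (π * (-1 - c))) := by
    have h0 : Tendsto (fun θ : ℝ => θ * (Real.cos θ - c)) (𝓝 π) (𝓝 (π * (Real.cos π - c))) :=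
      Continuous.tendsto (by continuity) π
    simpa using h0.mono_left nhdsWithin_le_nhds
  have := hnum.neg_mul_atTop (by nlinarith [Real.pi_pos]) hinv
  refine this.congr (fun θ => ?_)
  simp [Faux, div_eq_mul_inv]

/-- Lemma 5.2 of the paper: for non-half-integer flux (`cos(2πRA) ≠ −1`) and
`α > α_m := −2 sin²(πRA)/(πR)`, the cylinder spectral condition has a unique
solution `ℓ₁(α) ∈ (0, 1/(2R))`, and `α ↦ ν₁(α) = ℓ₁(α)²` is strictly
increasing and continuous on `(α_m, ∞)`. -/
theorem cylinder_lowest_eigenvalue_strictMono_continuous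
    (R A : ℝ) (hR : 0 < R) (hA : Real.cos (2 * π * R * A) ≠ -1) :
    (∀ α : ℝ, -(2 * Real.sin (π * R * A) ^ 2 / (π * R)) < α →
      ∃! ℓ : ℝ, ℓ ∈ Set.Ioo (0 : ℝ) (1 / (2 * R)) ∧
        -α = 2 * ℓ * (Real.cot (2 * π * R * ℓ)
          - Real.cos (2 * π * R * A) / Real.sin (2 * π * R * ℓ))) ∧
    ∀ L : ℝ → ℝ,
      (∀ α ∈ Set.Ioi (-(2 * Real.sin (π * R * A) ^ 2 / (π * R))),
        L α ∈ Set.Ioo (0 : ℝ) (1 / (2 * R)) ∧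
        -α = 2 * L α * (Real.cot (2 * π * R * L α)
          - Real.cos (2 * π * R * A) / Real.sin (2 * π * R * L α))) →
      StrictMonoOn (fun α : ℝ => (L α) ^ 2)
        (Set.Ioi (-(2 * Real.sin (π * R * A) ^ 2 / (π * R)))) ∧
      ContinuousOn (fun α : ℝ => (L α) ^ 2)
        (Set.Ioi (-(2 * Real.sin (π * R * A) ^ 2 / (π * R)))) := by
  have hπ := Real.pi_pos
  have hπR : 0 < π * R := mul_pos hπ hR
  set c : ℝ := Real.cos (2 * π * R * A) with hc
  have hc2 : c ≤ 1 := Real.cos_le_one _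
  have hc1 : -1 < c := lt_of_le_of_ne (Real.neg_one_le_cos _) (Ne.symm hA)
  -- rewrite α_m
  have hαm : -(2 * Real.sin (π * R * A) ^ 2 / (π * R)) = (c - 1) / (π * R) := by
    have h2 : c = Real.cos (π * R * A) ^ 2 - Real.sin (π * R * A) ^ 2 := by
      rw [hc, show 2 * π * R * A = 2 * (π * R * A) by ring, Real.cos_two_mul']
    have h3 := Real.sin_sq_add_cos_sq (π * R * A)
    rw [show (c - 1) = -(2 * Real.sin (π * R * A) ^ 2) by linarith, neg_div]
  rw [hαm]
  -- basic facts about the change of variables θ = 2πRℓ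
  have hmemθ : ∀ ℓ ∈ Set.Ioo (0:ℝ) (1 / (2 * R)), 2 * π * R * ℓ ∈ Set.Ioo (0:ℝ) π := by
    intro ℓ hℓ
    have h1 : ℓ * (2 * R) < 1 := (lt_div_iff₀ (by linarith)).mp hℓ.2
    constructor
    · nlinarith [hℓ.1]
    · nlinarith
  -- the rescaled spectral function
  set Φ : ℝ → ℝ := fun ℓ => -(Faux c (2 * π * R * ℓ)) / (π * R) with hΦ
  -- equation equivalence
  have key : ∀ ℓ ∈ Set.Ioo (0:ℝ) (1 / (2 * R)),
      2 * ℓ * (Real.cot (2 * π * R * ℓ) - c / Real.sin (2 * π * R * ℓ)) = -Φ ℓ := by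
    intro ℓ hℓ
    have hθ := hmemθ ℓ hℓ
    have hs : Real.sin (2 * π * R * ℓ) ≠ 0 := (Real.sin_pos_of_pos_of_lt_pi hθ.1 hθ.2).ne'
    rw [Real.cot_eq_cos_div_sin, hΦ]
    simp only [Faux, neg_div, neg_neg]
    field_simp
  have hiff : ∀ α ℓ, ℓ ∈ Set.Ioo (0:ℝ) (1 / (2 * R)) →
      ((-α = 2 * ℓ * (Real.cot (2 * π * R * ℓ) - c / Real.sin (2 * π * R * ℓ))) ↔ Φ ℓ = α) := by
    intro α ℓ hℓ
    rw [key ℓ hℓ]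
    constructor <;> intro h <;> linarith
  -- strict monotonicity of Φ
  have hanti := Faux_strictAntiOn hc1 hc2
  have hmono : StrictMonoOn Φ (Set.Ioo (0:ℝ) (1 / (2 * R))) := by
    intro x hx y hy hxy
    have hxy2 : 2 * π * R * x < 2 * π * R * y := by nlinarith
    have h := hanti (hmemθ x hx) (hmemθ y hy) hxy2
    rw [hΦ]
    simp only
    rw [div_lt_div_iff₀ hπR hπR]
    nlinarith
  -- existence and uniqueness
  have hexu : ∀ α : ℝ, (c - 1) / (π * R) < α →
      ∃! ℓ : ℝ, ℓ ∈ Set.Ioo (0 : ℝ) (1 / (2 * R)) ∧ Φ ℓ = α := by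
    intro α hα
    set t : ℝ := -α * (π * R) with ht
    have htlt : t < 1 - c := by
      rw [div_lt_iff₀ hπR] at hα
      nlinarith
    obtain ⟨θa, hθa1, hθa2⟩ :=
      (((Faux_tendsto_zero c).eventually_const_lt htlt).and
        ((Ioo_mem_nhdsGT_of_mem (left_mem_Ico.2 hπ)) :
          ∀ᶠ θ in 𝓝[>] (0:ℝ), θ ∈ Set.Ioo 0 π)).exists
    obtain ⟨θb, hθb1, hθb2⟩ :=
      (((Faux_tendsto_pi hc1).eventually (eventually_lt_atBot t)).and
        ((Ioo_mem_nhdsLT_of_mem (right_mem_Ioc.2 hπ)) :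
          ∀ᶠ θ in 𝓝[<] π, θ ∈ Set.Ioo 0 π)).exists
    have hab : θa < θb := (hanti.lt_iff_gt hθb2 hθa2).mp (by linarith)
    have hsub : Set.Icc θa θb ⊆ Set.Ioo 0 π := fun x hx =>
      ⟨hθa2.1.trans_le hx.1, hx.2.trans_lt hθb2.2⟩
    obtain ⟨θ, hθmem, hθeq⟩ := intermediate_value_Icc' hab.le (Faux_continuousOn.mono hsub)
      (Set.mem_Icc.2 ⟨hθb1.le, hθa1.le⟩)
    have hθIoo : θ ∈ Set.Ioo (0:ℝ) π := hsub hθmem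
    have hmem' : θ / (2 * π * R) ∈ Set.Ioo (0:ℝ) (1 / (2 * R)) := by
      refine ⟨div_pos hθIoo.1 (by positivity), ?_⟩
      rw [div_lt_div_iff₀ (by positivity) (by linarith)]
      nlinarith [hθIoo.2]
    have h1 : Φ (θ / (2 * π * R)) = α := by
      rw [hΦ]
      simp only
      rw [show 2 * π * R * (θ / (2 * π * R)) = θ by field_simp, hθeq, ht]
      field_simp
    refine ⟨θ / (2 * π * R), ⟨hmem', h1⟩, ?_⟩
    rintro ℓ' ⟨hℓ'1, hℓ'2⟩
    exact hmono.injOn hℓ'1 hmem' (hℓ'2.trans h1.symm)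
  constructor
  · intro α hα
    obtain ⟨ℓ, ⟨hℓ1, hℓ2⟩, hℓu⟩ := hexu α hα
    exact ⟨ℓ, ⟨hℓ1, (hiff α ℓ hℓ1).mpr hℓ2⟩, fun ℓ' h => hℓu ℓ' ⟨h.1, (hiff α ℓ' h.1).mp h.2⟩⟩
  · intro L hL
    have hLspec : ∀ α ∈ Set.Ioi ((c - 1) / (π * R)),
        L α ∈ Set.Ioo (0:ℝ) (1 / (2 * R)) ∧ Φ (L α) = α := by
      intro α hα
      obtain ⟨h1, h2⟩ := hL α hα
      exact ⟨h1, (hiff α (L α) h1).mp h2⟩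
    have hLmono : StrictMonoOn L (Set.Ioi ((c - 1) / (π * R))) := by
      intro x hx y hy hxy
      obtain ⟨hx1, hx2⟩ := hLspec x hx
      obtain ⟨hy1, hy2⟩ := hLspec y hy
      exact (hmono.lt_iff_lt hx1 hy1).mp (by rw [hx2, hy2]; exact hxy)
    have hLcont : ContinuousOn L (Set.Ioi ((c - 1) / (π * R))) := by
      intro α₀ hα₀
      obtain ⟨hm₀, he₀⟩ := hLspec α₀ hα₀
      rw [ContinuousWithinAt, tendsto_order]
      constructor
      · intro b hb
        obtain ⟨ℓm, hℓm1, hℓm2⟩ := exists_between (max_lt hb hm₀.1)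
        have hℓmem : ℓm ∈ Set.Ioo (0:ℝ) (1 / (2 * R)) :=
          ⟨(le_max_right b 0).trans_lt hℓm1, hℓm2.trans hm₀.2⟩
        have hu : Φ ℓm < α₀ := he₀ ▸ hmono hℓmem hm₀ hℓm2
        filter_upwards [eventually_nhdsWithin_of_eventually_nhds (eventually_gt_nhds hu),
          eventually_mem_nhdsWithin] with α h1 h2
        have hs := hLspec α h2
        have h3 : ℓm < L α := (hmono.lt_iff_lt hℓmem hs.1).mp (by rw [hs.2]; exact h1)
        exact ((le_max_left b 0).trans_lt hℓm1).trans h3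
      · intro b hb
        obtain ⟨ℓp, hℓp1, hℓp2⟩ := exists_between (lt_min hb hm₀.2)
        have hℓmem : ℓp ∈ Set.Ioo (0:ℝ) (1 / (2 * R)) :=
          ⟨hm₀.1.trans hℓp1, hℓp2.trans_le (min_le_right _ _)⟩
        have hu : α₀ < Φ ℓp := he₀ ▸ hmono hm₀ hℓmem hℓp1
        filter_upwards [eventually_nhdsWithin_of_eventually_nhds (eventually_lt_nhds hu),
          eventually_mem_nhdsWithin] with α h1 h2
        have hs := hLspec α h2
        have h3 : L α < ℓp := (hmono.lt_iff_lt hs.1 hℓmem).mp (by rw [hs.2]; exact h1)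
        exact h3.trans_le (hℓp2.le.trans (min_le_left _ _))
    constructor
    · intro x hx y hy hxy
      exact pow_lt_pow_left₀ (hLmono hx hy hxy) (hLspec x hx).1.1.le (by norm_num)
    · exact hLcont.pow 2
end

section
/- Let R > 0, A ∈ ℝ, α₀ ∈ ℝ, ν ∈ ℝ. Let χ : [0, 2πR] → ℂ be twice continuously differentiable with (−i·d/dv + A)²χ = ν·χ on (0, 2πR), χ(0) = χ(2πR), χ′(0) − χ′(2πR) = α₀·χ(0), ∫₀^{2πR} |χ(v)|² dv = 1, and χ(0) ≠ 0. Let ε > 0 and let α : ℝ → ℝ be measurable such that α − α₀ is integrable on ℝ, |α(u) − α₀| ≤ C·|u|^{−1−ε} for some C > 0 and all |u| ≥ 1, and ∫_ℝ (α(u) − α₀) du < 0. Then there exist a > 1, σ ∈ (0,1], and a Schwartz function φ : ℝ → ℝ with |φ| ≤ 1 and φ = 1 on [−a,a], such that the function Ψ(u,v) := φ_σ(u)·χ(v), where φ_σ is the exterior scaling of φ, satisfies ∫_ℝ ∫₀^{2πR} (|∂_uΨ|² + |(−i·∂_v + A)Ψ|²) dv du + ∫_ℝ α(u)·|Ψ(u,0)|²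 du < ν·∫_ℝ ∫₀^{2πR} |Ψ(u,v)|² dv du (with ∂_uΨ understood as the a.e.-defined derivative of the piecewise-C¹ function φ_σ times χ). -/
/-!
For a product `Ψ(u, v) = f(u) χ(v)` the transverse integrals factor out. Multiplying the
eigenvalue equation by `conj χ` and integrating by parts (the derivative of
`conj χ · (χ' + i A χ)` is `|(-i∂ + A)χ|² - ν|χ|²`), the periodicity and the jump condition turn
the boundary term into `-α₀ |χ(0)|²`, so `∫ |(-i∂ + A)χ|² = ν - α₀ |χ(0)|²` and the claim reduces
to `∫ f'² + |χ(0)|² ∫ (α - α₀) f² < 0`.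

Since `α - α₀` is integrable with negative integral, there is a window `[-a, a]` with
`∫_{-a}^{a} (α - α₀) + ∫_{|u| > a} |α - α₀| < 0`, which bounds the potential term by a fixed
negative number for every `f` with `|f| ≤ 1` and `f = 1` on the window. Taking for `φ` a bump
equal to `1` there, the exterior scaling `f = φ_σ` has kinetic energy at most `2σ ∫ φ'²`, so a
small `σ` wins.
-/

open Real MeasureTheory

open Set Filter Topology ComplexConjugate

section Transverse

open Complex

theorem hasDerivAt_conj_mul_of_magnetic_eigen {A ν v : ℝ} {χ χ' : ℝ → ℂ} {χ'' : ℂ}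
    (hχ : HasDerivAt χ (χ' v) v) (hχ' : HasDerivAt χ' χ'' v)
    (heigen : -χ'' - 2 * I * A * χ' v + A ^ 2 * χ v = ν * χ v) :
    HasDerivAt (fun v => conj (χ v) * (χ' v + I * A * χ v))
      ((‖-I * χ' v + A * χ v‖ ^ 2 - ν * ‖χ v‖ ^ 2 : ℝ) : ℂ) v := by
  refine (hχ.star.mul (hχ'.add (hχ.const_mul (I * A)))).congr_deriv ?_
  rw [show χ'' = -2 * I * A * χ' v + A ^ 2 * χ v - ν * χ v by linear_combination -heigen]
  push_cast
  rw [← conj_mul', ← conj_mul']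
  simp only [Pi.add_apply, RCLike.star_def, map_add, map_mul, map_neg, conj_I, conj_ofReal]
  linear_combination (conj (χ' v) * χ' v) * I_sq

theorem integral_norm_sq_magnetic_eq {a b A ν : ℝ} (hab : a ≤ b) {χ χ' χ'' : ℝ → ℂ}
    (hχ : ∀ v ∈ Icc a b, HasDerivWithinAt χ (χ' v) (Icc a b) v)
    (hχ' : ∀ v ∈ Icc a b, HasDerivWithinAt χ' (χ'' v) (Icc a b) v)
    (heigen : ∀ v ∈ Ioo a b, -χ'' v - 2 * I * A * χ' v + A ^ 2 * χ v = ν * χ v) :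
    ∫ v in a..b, ‖-I * χ' v + A * χ v‖ ^ 2
      = ν * (∫ v in a..b, ‖χ v‖ ^ 2) + (conj (χ b) * χ' b - conj (χ a) * χ' a).re := by
  have hχc : ContinuousOn χ (Icc a b) := fun v hv => (hχ v hv).continuousWithinAt
  have hχ'c : ContinuousOn χ' (Icc a b) := fun v hv => (hχ' v hv).continuousWithinAt
  set G : ℝ → ℂ := fun v => conj (χ v) * (χ' v + I * A * χ v)
  have hderiv : ∀ v ∈ Ioo a b,
      HasDerivAt G ((‖-I * χ' v + A * χ v‖ ^ 2 - ν * ‖χ v‖ ^ 2 : ℝ) : ℂ) v := by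
    intro v hv
    have hd := (hχ v (Ioo_subset_Icc_self hv)).hasDerivAt (Icc_mem_nhds hv.1 hv.2)
    have hd' := (hχ' v (Ioo_subset_Icc_self hv)).hasDerivAt (Icc_mem_nhds hv.1 hv.2)
    exact hasDerivAt_conj_mul_of_magnetic_eigen hd hd' (heigen v hv)
  have hint : IntervalIntegrable
      (fun v => ((‖-I * χ' v + A * χ v‖ ^ 2 - ν * ‖χ v‖ ^ 2 : ℝ) : ℂ)) volume a b :=
    ContinuousOn.intervalIntegrable_of_Icc hab (by fun_prop)
  have hG := intervalIntegral.integral_eq_sub_of_hasDerivAt_of_le hab (by fun_prop) hderiv hint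
  rw [intervalIntegral.integral_ofReal] at hG
  have hint_sq : ∀ {w : ℝ → ℂ}, ContinuousOn w (Icc a b) →
      IntervalIntegrable (fun v => ‖w v‖ ^ 2) volume a b := fun hw =>
    (hw.norm.pow 2).intervalIntegrable_of_Icc hab
  have hboundary : (G b - G a).re = (conj (χ b) * χ' b - conj (χ a) * χ' a).re := by
    simp only [G, sub_re, mul_re, add_re, conj_re, conj_im, I_re, I_im, ofReal_re, ofReal_im,
      add_im, mul_im]
    ring
  rw [← sub_eq_iff_eq_add', ← intervalIntegral.integral_const_mul,
    ← intervalIntegral.integral_sub (hint_sq (by fun_prop)) ((hint_sq hχc).const_mul ν),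
    ← hboundary, ← hG, ofReal_re]

theorem integral_norm_sq_magnetic_eq_of_jump {L A α₀ ν : ℝ} (hL : 0 ≤ L)
    {χ χ' χ'' : ℝ → ℂ}
    (hχ : ∀ v ∈ Icc 0 L, HasDerivWithinAt χ (χ' v) (Icc 0 L) v)
    (hχ' : ∀ v ∈ Icc 0 L, HasDerivWithinAt χ' (χ'' v) (Icc 0 L) v)
    (heigen : ∀ v ∈ Ioo 0 L, -χ'' v - 2 * I * A * χ' v + A ^ 2 * χ v = ν * χ v)
    (hper : χ 0 = χ L) (hjump : χ' 0 - χ' L = α₀ * χ 0)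
    (hnorm : ∫ v in 0..L, ‖χ v‖ ^ 2 = 1) :
    ∫ v in 0..L, ‖-I * χ' v + A * χ v‖ ^ 2 = ν - α₀ * ‖χ 0‖ ^ 2 := by
  have hboundary :
      conj (χ L) * χ' L - conj (χ 0) * χ' 0 = ((-(α₀ * ‖χ 0‖ ^ 2) : ℝ) : ℂ) := by
    rw [← hper, show χ' L = χ' 0 - α₀ * χ 0 by linear_combination -hjump]
    push_cast
    rw [← conj_mul']
    ring
  rw [integral_norm_sq_magnetic_eq hL hχ hχ' heigen, hnorm, hboundary, ofReal_re]
  ring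

end Transverse

section Affine

variable {E : Type*} [NormedAddCommGroup E]

theorem integral_comp_affine [NormedSpace ℝ E] (h : ℝ → E) (c σ d : ℝ) :
    ∫ u, h (c + σ * (u - d)) = |σ⁻¹| • ∫ y, h y := by
  calc ∫ u, h (c + σ * (u - d)) = ∫ x, h (c + σ * x) :=
        integral_sub_right_eq_self (fun x => h (c + σ * x)) d
    _ = |σ⁻¹| • ∫ y, h (c + y) := Measure.integral_comp_mul_left (fun y => h (c + y)) σ
    _ = |σ⁻¹| • ∫ y, h y := by rw [integral_add_left_eq_self]

theorem MeasureTheory.Integrable.comp_affine {h : ℝ → E} (hh : Integrable h) (c : ℝ) {σ : ℝ}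
    (hσ : σ ≠ 0) (d : ℝ) : Integrable fun u => h (c + σ * (u - d)) :=
  ((hh.comp_add_left c).comp_mul_left' hσ).comp_sub_right d

theorem integral_sq_const_mul_comp_affine (h : ℝ → ℝ) (c d : ℝ) {σ : ℝ} (hσ : 0 < σ) :
    ∫ u, (σ * h (c + σ * (u - d))) ^ 2 = σ * ∫ y, h y ^ 2 := by
  simp_rw [mul_pow]
  rw [integral_const_mul, integral_comp_affine (fun y => h y ^ 2), abs_inv, abs_of_pos hσ,
    smul_eq_mul]
  field_simp

end Affine

section ExtScaling

variable {a σ : ℝ} {φ : ℝ → ℝ}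

theorem extScaling_eq_of_neg_le (hσ0 : 0 ≤ σ) (hσ1 : σ ≤ 1) (hφ : ∀ u, |u| ≤ a → φ u = 1)
    {u : ℝ} (hu : -a ≤ u) : extScaling a σ φ u = φ (a + σ * (u - a)) := by
  unfold extScaling
  split_ifs with h h'
  · rw [hφ u h, hφ]
    rw [abs_le] at h ⊢
    constructor <;> nlinarith
  · rfl
  · rw [abs_le] at h
    exact absurd ⟨hu, by linarith⟩ h

theorem extScaling_eq_of_le (hσ0 : 0 ≤ σ) (hσ1 : σ ≤ 1) (hφ : ∀ u, |u| ≤ a → φ u = 1)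
    {u : ℝ} (hu : u ≤ a) : extScaling a σ φ u = φ (-a + σ * (u + a)) := by
  unfold extScaling
  split_ifs with h h'
  · rw [hφ u h, hφ]
    rw [abs_le] at h ⊢
    constructor <;> nlinarith
  · linarith
  · rfl

theorem abs_extScaling_le (hφ : ∀ u, |φ u| ≤ 1) (u : ℝ) : |extScaling a σ φ u| ≤ 1 := by
  unfold extScaling
  split_ifs <;> apply hφ

theorem measurable_extScaling (hφ : Measurable φ) : Measurable (extScaling a σ φ) := by
  unfold extScaling
  refine Measurable.ite (measurableSet_le (by fun_prop) (by fun_prop)) hφ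
    (Measurable.ite (measurableSet_lt (by fun_prop) (by fun_prop)) ?_ ?_) <;> fun_prop

theorem hasDerivAt_extScaling_of_neg_lt (hσ0 : 0 ≤ σ) (hσ1 : σ ≤ 1)
    (hφ : ∀ u, |u| ≤ a → φ u = 1) (hd : Differentiable ℝ φ) {u : ℝ} (hu : -a < u) :
    HasDerivAt (extScaling a σ φ) (σ * deriv φ (a + σ * (u - a))) u := by
  have haff : HasDerivAt (fun x => a + σ * (x - a)) σ u := by
    simpa using (((hasDerivAt_id u).sub_const a).const_mul σ).const_add a
  rw [mul_comm]
  refine ((hd _).hasDerivAt.comp u haff).congr_of_eventuallyEq ?_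
  filter_upwards [Ioi_mem_nhds hu] with x hx
  exact extScaling_eq_of_neg_le hσ0 hσ1 hφ (le_of_lt hx)

theorem hasDerivAt_extScaling_of_lt (hσ0 : 0 ≤ σ) (hσ1 : σ ≤ 1)
    (hφ : ∀ u, |u| ≤ a → φ u = 1) (hd : Differentiable ℝ φ) {u : ℝ} (hu : u < a) :
    HasDerivAt (extScaling a σ φ) (σ * deriv φ (-a + σ * (u + a))) u := by
  have haff : HasDerivAt (fun x => -a + σ * (x + a)) σ u := by
    simpa using (((hasDerivAt_id u).add_const a).const_mul σ).const_add (-a)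
  rw [mul_comm]
  refine ((hd _).hasDerivAt.comp u haff).congr_of_eventuallyEq ?_
  filter_upwards [Iio_mem_nhds hu] with x hx
  exact extScaling_eq_of_le hσ0 hσ1 hφ (le_of_lt hx)

theorem integrable_extScaling_sq (ha : 0 ≤ a) (hσ0 : 0 < σ) (hσ1 : σ ≤ 1)
    (hφ : ∀ u, |u| ≤ a → φ u = 1) (hm : Measurable φ) (hφ2 : Integrable fun y => φ y ^ 2) :
    Integrable fun u => extScaling a σ φ u ^ 2 := by
  refine Integrable.mono' (g := fun u => φ (a + σ * (u - a)) ^ 2 + φ (-a + σ * (u + a)) ^ 2)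
    ((hφ2.comp_affine a hσ0.ne' a).add ?_)
    ((measurable_extScaling hm).pow_const 2).aestronglyMeasurable (ae_of_all _ fun u => ?_)
  · simpa only [sub_neg_eq_add] using hφ2.comp_affine (-a) hσ0.ne' (-a)
  rw [Real.norm_of_nonneg (sq_nonneg _)]
  rcases le_total (-a) u with hu | hu
  · rw [extScaling_eq_of_neg_le hσ0.le hσ1 hφ hu]
    nlinarith [sq_nonneg (φ (-a + σ * (u + a)))]
  · rw [extScaling_eq_of_le hσ0.le hσ1 hφ (by linarith)]
    nlinarith [sq_nonneg (φ (a + σ * (u - a)))]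

theorem integral_deriv_extScaling_sq_le (ha : 0 < a) (hσ0 : 0 < σ) (hσ1 : σ ≤ 1)
    (hφ : ∀ u, |u| ≤ a → φ u = 1) (hd : Differentiable ℝ φ)
    (hφ' : Integrable fun y => deriv φ y ^ 2) :
    ∫ u, deriv (extScaling a σ φ) u ^ 2 ≤ 2 * σ * ∫ y, deriv φ y ^ 2 := by
  set dR := fun u => σ * deriv φ (a + σ * (u - a))
  set dL := fun u => σ * deriv φ (-a + σ * (u - -a))
  have hint : ∀ c, Integrable fun u => (σ * deriv φ (c + σ * (u - c))) ^ 2 := fun c => by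
    simpa only [mul_pow] using (hφ'.comp_affine c hσ0.ne' c).const_mul (σ ^ 2)
  have hle : ∀ u, deriv (extScaling a σ φ) u ^ 2 ≤ dR u ^ 2 + dL u ^ 2 := by
    intro u
    rcases lt_or_ge (-a) u with hu | hu
    · rw [(hasDerivAt_extScaling_of_neg_lt hσ0.le hσ1 hφ hd hu).deriv]
      nlinarith [sq_nonneg (dL u)]
    · rw [(hasDerivAt_extScaling_of_lt hσ0.le hσ1 hφ hd (by linarith)).deriv,
        ← sub_neg_eq_add u a]
      nlinarith [sq_nonneg (dR u)]
  calc ∫ u, deriv (extScaling a σ φ) u ^ 2 ≤ ∫ u, (dR u ^ 2 + dL u ^ 2) :=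
        integral_mono_of_nonneg (ae_of_all _ fun u => sq_nonneg _) ((hint a).add (hint (-a)))
          (ae_of_all _ hle)
    _ = 2 * σ * ∫ y, deriv φ y ^ 2 := by
      rw [integral_add (hint a) (hint (-a)), integral_sq_const_mul_comp_affine _ _ _ hσ0,
        integral_sq_const_mul_comp_affine _ _ _ hσ0]
      ring

end ExtScaling

section Weight

variable {g : ℝ → ℝ}

theorem integral_mul_le_of_eq_one_on (hg : Integrable g) {w : ℝ → ℝ}
    (hw : AEStronglyMeasurable w) (hw0 : ∀ u, 0 ≤ w u) (hw1 : ∀ u, w u ≤ 1) {a : ℝ} (ha : 0 ≤ a)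
    (hwa : ∀ u, |u| ≤ a → w u = 1) :
    ∫ u, g u * w u ≤ (∫ u in -a..a, g u) + ((∫ u, |g u|) - ∫ u in -a..a, |g u|) := by
  have hgw : Integrable fun u => g u * w u :=
    hg.mul_bdd hw (ae_of_all _ fun u => by rw [Real.norm_of_nonneg (hw0 u)]; exact hw1 u)
  have hwin : ∫ u in Ioc (-a) a, g u * w u = ∫ u in -a..a, g u := by
    rw [intervalIntegral.integral_of_le (by linarith)]
    refine setIntegral_congr_fun measurableSet_Ioc fun u hu => ?_
    rw [hwa u (abs_le.mpr ⟨hu.1.le, hu.2⟩), mul_one]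
  have hwout : ∫ u in (Ioc (-a) a)ᶜ, g u * w u ≤ ∫ u in (Ioc (-a) a)ᶜ, |g u| :=
    setIntegral_mono hgw.integrableOn hg.abs.integrableOn fun u =>
      (mul_le_of_le_one_right (abs_nonneg _) (hw1 u)).trans'
        (mul_le_mul_of_nonneg_right (le_abs_self _) (hw0 u))
  have habs := integral_add_compl (measurableSet_Ioc (a := -a) (b := a)) hg.abs
  rw [← intervalIntegral.integral_of_le (by linarith)] at habs
  rw [← integral_add_compl measurableSet_Ioc hgw, hwin]
  linarith

theorem tendsto_integral_symm_add_integral_abs_compl (hg : Integrable g) :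
    Tendsto (fun r => (∫ u in -r..r, g u) + ((∫ u, |g u|) - ∫ u in -r..r, |g u|)) atTop
      (𝓝 (∫ u, g u)) := by
  have hg' := intervalIntegral_tendsto_integral hg tendsto_neg_atTop_atBot tendsto_id
  have habs := intervalIntegral_tendsto_integral hg.abs tendsto_neg_atTop_atBot tendsto_id
  simpa using hg'.add ((tendsto_const_nhds (x := ∫ u, |g u|)).sub habs)

theorem exists_forall_integral_mul_le_neg (hg : Integrable g) (hneg : ∫ u, g u < 0) :
    ∃ a B : ℝ, 1 < a ∧ B < 0 ∧ ∀ w : ℝ → ℝ, AEStronglyMeasurable w → (∀ u, 0 ≤ w u) →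
      (∀ u, w u ≤ 1) → (∀ u, |u| ≤ a → w u = 1) → ∫ u, g u * w u ≤ B := by
  obtain ⟨a, hB, ha⟩ := (((tendsto_integral_symm_add_integral_abs_compl hg).eventually
    (gt_mem_nhds hneg)).and (eventually_gt_atTop 1)).exists
  exact ⟨a, _, ha, hB, fun w hw hw0 hw1 hwa =>
    integral_mul_le_of_eq_one_on hg hw hw0 hw1 (by linarith) hwa⟩

end Weight

theorem exists_schwartzMap_abs_le_one_eq_one {a : ℝ} (ha : 0 < a) :
    ∃ φ : SchwartzMap ℝ ℝ, (∀ u, |φ u| ≤ 1) ∧ ∀ u, |u| ≤ a → φ u = 1 := by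
  let bump : ContDiffBump (0 : ℝ) := ⟨a, a + 1, ha, by linarith⟩
  refine ⟨bump.hasCompactSupport.toSchwartzMap bump.contDiff, fun u => ?_, fun u hu => ?_⟩
  · exact abs_le.mpr ⟨(neg_nonpos.mpr zero_le_one).trans bump.nonneg, bump.le_one⟩
  · exact bump.one_of_mem_closedBall (by simpa using hu)

theorem exists_extScaling_reduced_energy_neg {g : ℝ → ℝ} (hg : Integrable g)
    (hneg : ∫ u, g u < 0) {N : ℝ} (hN : 0 < N) :
    ∃ (a σ : ℝ) (φ : SchwartzMap ℝ ℝ), 1 < a ∧ 0 < σ ∧ σ ≤ 1 ∧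
      (∀ u, |φ u| ≤ 1) ∧ (∀ u, |u| ≤ a → φ u = 1) ∧
      Integrable (fun u => extScaling a σ φ u ^ 2) ∧
      Integrable (fun u => g u * extScaling a σ φ u ^ 2) ∧
      (∫ u, deriv (extScaling a σ φ) u ^ 2) + N * ∫ u, g u * extScaling a σ φ u ^ 2 < 0 := by
  obtain ⟨a, B, ha, hB, hweight⟩ := exists_forall_integral_mul_le_neg hg hneg
  obtain ⟨φ, hφ1, hφa⟩ := exists_schwartzMap_abs_le_one_eq_one (by linarith : 0 < a)
  set K := ∫ y, deriv φ y ^ 2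
  have hK : 0 ≤ K := integral_nonneg fun y => sq_nonneg _
  set σ := min 1 (N * -B / (2 * K + 1))
  have hσ0 : 0 < σ := lt_min one_pos (by have := mul_pos hN (neg_pos.mpr hB); positivity)
  have hσ1 : σ ≤ 1 := min_le_left _ _
  have hσK : σ * (2 * K + 1) ≤ N * -B := (le_div_iff₀ (by positivity)).mp (min_le_right _ _)
  set f := extScaling a σ φ
  have hf1 : ∀ u, f u ^ 2 ≤ 1 := fun u => by
    rw [← sq_abs]; exact pow_le_one₀ (abs_nonneg _) (abs_extScaling_le hφ1 u)
  have hfm : Measurable fun u => f u ^ 2 :=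
    (measurable_extScaling φ.continuous.measurable).pow_const 2
  have hgf : Integrable fun u => g u * f u ^ 2 :=
    hg.mul_bdd hfm.aestronglyMeasurable (ae_of_all _ fun u => by
      rw [Real.norm_of_nonneg (sq_nonneg _)]; exact hf1 u)
  have hkin : ∫ u, deriv f u ^ 2 ≤ 2 * σ * K :=
    integral_deriv_extScaling_sq_le (by linarith) hσ0 hσ1 hφa φ.differentiable
      (by simpa only [SchwartzMap.derivCLM_apply] using
        ((SchwartzMap.derivCLM ℝ ℝ φ).memLp 2).integrable_sq)
  have hpot : ∫ u, g u * f u ^ 2 ≤ B :=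
    hweight _ hfm.aestronglyMeasurable (fun u => sq_nonneg _) hf1 fun u hu => by
      simp [f, extScaling, hu, hφa u hu]
  refine ⟨a, σ, φ, ha, hσ0, hσ1, hφ1, hφa, integrable_extScaling_sq (by linarith) hσ0 hσ1 hφa
    φ.continuous.measurable (φ.memLp 2).integrable_sq, hgf, ?_⟩
  linarith [mul_le_mul_of_nonneg_left hpot hN.le]

open Complex in
theorem product_energy_lt_of_reduced_energy_neg {L A α₀ ν : ℝ} {χ χ' : ℝ → ℂ}
    {α f D : ℝ → ℝ}
    (hnorm : ∫ v in 0..L, ‖χ v‖ ^ 2 = 1)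
    (htrans : ∫ v in 0..L, ‖-I * χ' v + A * χ v‖ ^ 2 = ν - α₀ * ‖χ 0‖ ^ 2)
    (hf : Integrable fun u => f u ^ 2) (hαf : Integrable fun u => (α u - α₀) * f u ^ 2)
    (hneg : (∫ u, D u ^ 2) + ‖χ 0‖ ^ 2 * ∫ u, (α u - α₀) * f u ^ 2 < 0) :
    (∫ u, ∫ v in 0..L, ‖(D u : ℂ) * χ v‖ ^ 2)
      + (∫ u, ∫ v in 0..L, ‖(f u : ℂ) * (-I * χ' v + A * χ v)‖ ^ 2)
      + (∫ u, α u * ‖(f u : ℂ) * χ 0‖ ^ 2)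
      < ν * ∫ u, ∫ v in 0..L, ‖(f u : ℂ) * χ v‖ ^ 2 := by
  have hsq : ∀ (c : ℝ) (z : ℂ), ‖(c : ℂ) * z‖ ^ 2 = c ^ 2 * ‖z‖ ^ 2 := fun c z => by
    rw [norm_mul, mul_pow, norm_real, Real.norm_eq_abs, sq_abs]
  have hα : ∫ u, α u * (f u ^ 2 * ‖χ 0‖ ^ 2)
      = ‖χ 0‖ ^ 2 * (∫ u, (α u - α₀) * f u ^ 2) + α₀ * ‖χ 0‖ ^ 2 * ∫ u, f u ^ 2 := by
    rw [← integral_const_mul, ← integral_const_mul, ← integral_add (hαf.const_mul _)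
      (hf.const_mul _)]
    congr 1 with u
    ring
  simp only [hsq, intervalIntegral.integral_const_mul, hnorm, htrans, mul_one, hα,
    integral_mul_const]
  linear_combination hneg

theorem cylinder_trial_function_negative_energy_general
    (R A α₀ ν : ℝ) (hR : 0 < R)
    (χ χ' χ'' : ℝ → ℂ)
    (hχ' : ∀ v ∈ Set.Icc (0 : ℝ) (2 * π * R),
      HasDerivWithinAt χ (χ' v) (Set.Icc (0 : ℝ) (2 * π * R)) v)
    (hχ'' : ∀ v ∈ Set.Icc (0 : ℝ) (2 * π * R),
      HasDerivWithinAt χ' (χ'' v) (Set.Icc (0 : ℝ) (2 * π * R)) v)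
    (heigen : ∀ v ∈ Set.Ioo (0 : ℝ) (2 * π * R),
      -χ'' v - 2 * Complex.I * (A : ℂ) * χ' v + (A : ℂ) ^ 2 * χ v
        = (ν : ℂ) * χ v)
    (hper : χ 0 = χ (2 * π * R))
    (hjump : χ' 0 - χ' (2 * π * R) = (α₀ : ℂ) * χ 0)
    (hnorm : (∫ v in (0 : ℝ)..(2 * π * R), ‖χ v‖ ^ 2) = 1)
    (hχ0 : χ 0 ≠ 0)
    (α : ℝ → ℝ)
    (hα1 : Integrable (fun u : ℝ => α u - α₀))
    (hαneg : (∫ u : ℝ, (α u - α₀)) < 0) :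
    ∃ (a σ : ℝ) (φ : SchwartzMap ℝ ℝ), 1 < a ∧ 0 < σ ∧ σ ≤ 1 ∧
      (∀ u : ℝ, |φ u| ≤ 1) ∧ (∀ u : ℝ, |u| ≤ a → φ u = 1) ∧
      (∫ u : ℝ, ∫ v in (0 : ℝ)..(2 * π * R),
          ‖(Complex.ofReal (deriv (extScaling a σ ⇑φ) u)) * χ v‖ ^ 2)
        + (∫ u : ℝ, ∫ v in (0 : ℝ)..(2 * π * R),
            ‖(Complex.ofReal (extScaling a σ ⇑φ u)) *
              (-(Complex.I) * χ' v + (A : ℂ) * χ v)‖ ^ 2)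
        + (∫ u : ℝ, α u * ‖(Complex.ofReal (extScaling a σ ⇑φ u)) * χ 0‖ ^ 2)
        < ν * ∫ u : ℝ, ∫ v in (0 : ℝ)..(2 * π * R),
            ‖(Complex.ofReal (extScaling a σ ⇑φ u)) * χ v‖ ^ 2 := by
  obtain ⟨a, σ, φ, ha, hσ0, hσ1, hφ1, hφa, hf, hαf, hneg⟩ :=
    exists_extScaling_reduced_energy_neg hα1 hαneg (pow_pos (norm_pos_iff.mpr hχ0) 2)
  have htrans :=
    integral_norm_sq_magnetic_eq_of_jump (by positivity) hχ' hχ'' heigen hper hjump hnorm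
  exact ⟨a, σ, φ, ha, hσ0, hσ1, hφ1, hφa,
    product_energy_lt_of_reduced_energy_neg hnorm htrans hf hαf hneg⟩

/-- Variational core of Theorem 5.3: on the Aharonov–Bohm cylinder with a
δ-barrier whose coupling `α` tends to `α₀` with `|α(u) − α₀| = O(|u|^{−1−ε})`
and is attractive in the mean, and with a normalized transverse eigenfunction
`χ` (eigenvalue `ν`, coupling `α₀`) not vanishing at the barrier, the shifted
magnetic quadratic form is negative on the trial function
`Ψ(u,v) = φ_σ(u)χ(v)` for a suitable exterior-scaled Schwartz cutoff. -/
theorem cylinder_trial_function_negative_energy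
    (R A α₀ ν : ℝ) (hR : 0 < R)
    (χ χ' χ'' : ℝ → ℂ)
    (hχ' : ∀ v ∈ Set.Icc (0 : ℝ) (2 * π * R),
      HasDerivWithinAt χ (χ' v) (Set.Icc (0 : ℝ) (2 * π * R)) v)
    (hχ'' : ∀ v ∈ Set.Icc (0 : ℝ) (2 * π * R),
      HasDerivWithinAt χ' (χ'' v) (Set.Icc (0 : ℝ) (2 * π * R)) v)
    (hχ''cont : ContinuousOn χ'' (Set.Icc (0 : ℝ) (2 * π * R)))
    (heigen : ∀ v ∈ Set.Ioo (0 : ℝ) (2 * π * R),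
      -χ'' v - 2 * Complex.I * (A : ℂ) * χ' v + (A : ℂ) ^ 2 * χ v
        = (ν : ℂ) * χ v)
    (hper : χ 0 = χ (2 * π * R))
    (hjump : χ' 0 - χ' (2 * π * R) = (α₀ : ℂ) * χ 0)
    (hnorm : (∫ v in (0 : ℝ)..(2 * π * R), ‖χ v‖ ^ 2) = 1)
    (hχ0 : χ 0 ≠ 0)
    (ε : ℝ) (hε : 0 < ε) (α : ℝ → ℝ) (hαm : Measurable α)
    (hα1 : Integrable (fun u : ℝ => α u - α₀))
    (hαdecay : ∃ C : ℝ, 0 < C ∧ ∀ u : ℝ, 1 ≤ |u| →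
      |α u - α₀| ≤ C * |u| ^ (-1 - ε))
    (hαneg : (∫ u : ℝ, (α u - α₀)) < 0) :
    ∃ (a σ : ℝ) (φ : SchwartzMap ℝ ℝ), 1 < a ∧ 0 < σ ∧ σ ≤ 1 ∧
      (∀ u : ℝ, |φ u| ≤ 1) ∧ (∀ u : ℝ, |u| ≤ a → φ u = 1) ∧
      (∫ u : ℝ, ∫ v in (0 : ℝ)..(2 * π * R),
          ‖(Complex.ofReal (deriv (extScaling a σ ⇑φ) u)) * χ v‖ ^ 2)
        + (∫ u : ℝ, ∫ v in (0 : ℝ)..(2 * π * R),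
            ‖(Complex.ofReal (extScaling a σ ⇑φ u)) *
              (-(Complex.I) * χ' v + (A : ℂ) * χ v)‖ ^ 2)
        + (∫ u : ℝ, α u * ‖(Complex.ofReal (extScaling a σ ⇑φ u)) * χ 0‖ ^ 2)
        < ν * ∫ u : ℝ, ∫ v in (0 : ℝ)..(2 * π * R),
            ‖(Complex.ofReal (extScaling a σ ⇑φ u)) * χ v‖ ^ 2 :=
  cylinder_trial_function_negative_energy_general R A α₀ ν hR χ χ' χ'' hχ' hχ'' heigen hper hjump
    hnorm hχ0 α hα1 hαneg
end
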